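/- arXiv:1406.0069 — 12 statements merged into one kernel-verified Lean document; each statement's English description precedes it below -/
import Mathlib

section
/- Let D be a central division algebra of prime degree p over a field F of characteristic not p containing a primitive p-th root of unity ρ, and suppose x, z ∈ D with x^p ∈ F^×, z^p ∈ F^×, both noncentral. Write z = z_i + z_j with z_i x = ρ^i x z_i, z_j x = ρ^j x z_j for i ≠ j (i.e. only two eigencomponents of z with respect to conjugation by x are nonzero). Then z_i^p ∈ F and z_j^p ∈ F; in particular z^p = z_i^p + z_j^p. -/
/-!
Write `E c` for the `c`-eigenspace of `v ↦ x⁻¹ * v * x`. These eigenspaces multiply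
(`E c * E d ⊆ E (c * d)`) and are independent. Expanding `(zi + zj) ^ p` into words, a word with
`a` letters `zi` and `b` letters `zj` lies in `E (ρ ^ (i * a) * ρ ^ (j * b))`; for `a + b = p`
this eigenvalue is `1` only for the two words `zi ^ p` and `zj ^ p`. As `z ^ p` is central it
equals its `E 1`-component, which is `zi ^ p + zj ^ p`.

If `0 ≠ y ∈ E c` with `c` a primitive `p`-th root of unity, the `p ^ 2` products `x ^ k * y ^ l`
(`k, l < p`) are linearly independent, because `X ^ p - C α` is the minimal polynomial of `x`;
so they form a basis of `D`, and `y ^ p`, which commutes with `x` and `y`, is central. This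
applies to whichever of `zi`, `zj` has nonzero index, and the other `p`-th power is `z ^ p`
minus that one.
-/

open Polynomial Finset

section
variable {F D : Type*} [Field F] [DivisionRing D] [Algebra F D]

/-- `v ∈ conjEigenspace x c` means `x⁻¹ * v * x = c • v`, stated without inverting `x`. -/
def conjEigenspace (x : D) (c : F) : Submodule F D where
  carrier := {v | v * x = c • (x * v)}
  add_mem' {u v} hu hv := by
    simp only [Set.mem_ofPred_eq] at *
    rw [add_mul, hu, hv, mul_add, smul_add]
  zero_mem' := by simp
  smul_mem' a v hv := by
    simp only [Set.mem_ofPred_eq] at *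
    rw [smul_mul_assoc, hv, mul_smul_comm, smul_comm]

namespace conjEigenspace

variable {x u v : D} {c d : F}

theorem mem_iff : v ∈ conjEigenspace x c ↔ v * x = c • (x * v) := Iff.rfl

theorem mem_one_iff : v ∈ conjEigenspace x (1 : F) ↔ Commute v x := by
  rw [mem_iff, one_smul]; rfl

theorem mul_mem (hu : u ∈ conjEigenspace x c) (hv : v ∈ conjEigenspace x d) :
    u * v ∈ conjEigenspace x (c * d) := by
  rw [mem_iff] at *
  rw [mul_assoc, hv, mul_smul_comm, ← mul_assoc, hu, smul_mul_assoc, smul_smul, mul_comm d,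
    mul_assoc]

theorem pow_mem (hu : u ∈ conjEigenspace x c) (n : ℕ) : u ^ n ∈ conjEigenspace x (c ^ n) := by
  induction n with
  | zero => simpa only [pow_zero] using (mem_one_iff (F := F)).2 (Commute.one_left x)
  | succ n ih => simpa only [pow_succ] using mul_mem ih hu

theorem eq_eigenspace (hx : x ≠ 0) (c : F) :
    conjEigenspace x c =
      Module.End.eigenspace (LinearMap.mulLeft F x⁻¹ ∘ₗ LinearMap.mulRight F x) c := by
  ext v
  rw [Module.End.mem_eigenspace_iff, mem_iff, LinearMap.comp_apply, LinearMap.mulRight_apply,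
    LinearMap.mulLeft_apply, ← mul_smul_comm, inv_mul_eq_iff_eq_mul₀ hx]

theorem iSupIndep (hx : x ≠ 0) : iSupIndep (conjEigenspace (F := F) x) := by
  rw [show conjEigenspace (F := F) x = _ from funext (eq_eigenspace hx)]
  exact Module.End.eigenspaces_iSupIndep _

theorem sum_filter_eq_sum {ι : Type*} [DecidableEq F] (hx : x ≠ 0) {s : Finset ι} {μ : ι → F}
    {w : ι → D} (hw : ∀ a ∈ s, w a ∈ conjEigenspace x (μ a))
    (hs : ∑ a ∈ s, w a ∈ conjEigenspace x c) :
    ∑ a ∈ s with μ a = c, w a = ∑ a ∈ s, w a := by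
  have hsplit := sum_filter_add_sum_filter_not s (μ · = c) w
  have hin : ∑ a ∈ s with μ a ≠ c, w a ∈ conjEigenspace x c := by
    rw [← hsplit] at hs
    refine (Submodule.add_mem_iff_right _ (Submodule.sum_mem _ fun a ha => ?_)).1 hs
    rw [mem_filter] at ha
    exact ha.2 ▸ hw a ha.1
  have hout : ∑ a ∈ s with μ a ≠ c, w a ∈ ⨆ (d) (_ : d ≠ c), conjEigenspace x d := by
    refine Submodule.sum_mem _ fun a ha => ?_
    rw [mem_filter] at ha
    exact Submodule.mem_iSup_of_mem (μ a) (Submodule.mem_iSup_of_mem ha.2 (hw a ha.1))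
  have hzero := (iSupIndep hx c).le_bot ⟨hin, hout⟩
  rw [← hsplit, (Submodule.mem_bot F).1 hzero, add_zero]

end conjEigenspace

/-- The sum of all words in `u` and `v` with `a` letters `u` and `b` letters `v`. -/
def wordSum (u v : D) : ℕ → ℕ → D
  | 0, 0 => 1
  | a + 1, 0 => wordSum u v a 0 * u
  | 0, b + 1 => wordSum u v 0 b * v
  | a + 1, b + 1 => wordSum u v a (b + 1) * u + wordSum u v (a + 1) b * v

namespace wordSum

variable {u v : D}

theorem zero_left (b : ℕ) : wordSum u v 0 b = v ^ b := by
  induction b with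
  | zero => rw [wordSum, pow_zero]
  | succ b ih => rw [wordSum, ih, pow_succ]

theorem zero_right (a : ℕ) : wordSum u v a 0 = u ^ a := by
  induction a with
  | zero => rw [wordSum, pow_zero]
  | succ a ih => rw [wordSum, ih, pow_succ]

theorem eq_add_of_add_ne_zero {a b : ℕ} (h : a + b ≠ 0) :
    wordSum u v a b = (if a = 0 then 0 else wordSum u v (a - 1) b * u) +
      (if b = 0 then 0 else wordSum u v a (b - 1) * v) := by
  match a, b, h with
  | a + 1, 0, _ => simp [wordSum]
  | 0, b + 1, _ => simp [wordSum]
  | a + 1, b + 1, _ => simp [wordSum]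

theorem sum_antidiagonal (n : ℕ) :
    ∑ ab ∈ antidiagonal n, wordSum u v ab.1 ab.2 = (u + v) ^ n := by
  induction n with
  | zero => simp [wordSum]
  | succ n ih =>
    simp_rw [pow_succ, ← ih, sum_mul, mul_add]
    rw [sum_add_distrib,
      sum_congr rfl fun ab hab => eq_add_of_add_ne_zero (by rw [mem_antidiagonal.1 hab]; omega),
      sum_add_distrib, Nat.sum_antidiagonal_succ, Nat.sum_antidiagonal_succ']
    simp

theorem mem_conjEigenspace {x : D} {c d : F} (hu : u ∈ conjEigenspace x c)
    (hv : v ∈ conjEigenspace x d) (a b : ℕ) :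
    wordSum u v a b ∈ conjEigenspace x (c ^ a * d ^ b) := by
  induction a, b using wordSum.induct with
  | case1 => simpa [wordSum] using conjEigenspace.pow_mem hu 0
  | case2 a ih => simpa [wordSum, pow_succ] using conjEigenspace.mul_mem ih hu
  | case3 b ih => simpa [wordSum, pow_succ] using conjEigenspace.mul_mem ih hv
  | case4 a b ih₁ ih₂ =>
    rw [Nat.succ_eq_add_one, Nat.succ_eq_add_one, wordSum]
    refine Submodule.add_mem _ ?_ ?_
    · convert conjEigenspace.mul_mem ih₁ hu using 2; ring
    · convert conjEigenspace.mul_mem ih₂ hv using 2; ring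

end wordSum

theorem pow_mul_pow_eq_one_iff {p : ℕ} (hp : p.Prime) {c d : F} (hc : c ^ p = 1)
    (hd : d ^ p = 1) (hcd : c ≠ d) {a b : ℕ} (hab : a + b = p) :
    c ^ a * d ^ b = 1 ↔ a = 0 ∨ b = 0 := by
  have hd0 : d ≠ 0 := by
    rintro rfl
    simp [hp.ne_zero] at hd
  have hord : orderOf (c / d) = p := by
    have := Fact.mk hp
    exact orderOf_eq_prime (by rw [div_pow, hc, hd, div_one])
      (by rwa [Ne, div_eq_one_iff_eq hd0])
  have hquot : c ^ a * d ^ b = (c / d) ^ a := by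
    rw [div_pow, ← mul_one (_ / _), ← hd, ← hab, pow_add]
    field_simp
  rw [hquot, ← orderOf_dvd_iff_pow_eq_one, hord]
  constructor
  · intro hdvd
    rcases Nat.eq_zero_or_pos b with hb | hb
    · exact Or.inr hb
    · exact Or.inl (Nat.eq_zero_of_dvd_of_lt hdvd (by omega))
  · rintro (rfl | rfl)
    · exact dvd_zero p
    · exact hab ▸ dvd_rfl

theorem add_pow_eq_of_mem_conjEigenspace {p : ℕ} (hp : p.Prime) {x u v : D} {c d : F}
    (hx : x ≠ 0) (hc : c ^ p = 1) (hd : d ^ p = 1) (hcd : c ≠ d)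
    (hu : u ∈ conjEigenspace x c) (hv : v ∈ conjEigenspace x d)
    (huv : (u + v) ^ p ∈ conjEigenspace x (1 : F)) :
    (u + v) ^ p = u ^ p + v ^ p := by
  classical
  have hfilter : {ab ∈ antidiagonal p | c ^ ab.1 * d ^ ab.2 = 1} = {(p, 0), (0, p)} := by
    ext ⟨a, b⟩
    simp only [mem_filter, HasAntidiagonal.mem_antidiagonal, mem_insert, mem_singleton,
      Prod.mk.injEq]
    constructor
    · rintro ⟨hab, h⟩
      rcases (pow_mul_pow_eq_one_iff hp hc hd hcd hab).1 h with rfl | rfl <;> omega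
    · intro h
      have hab : a + b = p := by omega
      exact ⟨hab, (pow_mul_pow_eq_one_iff hp hc hd hcd hab).2 (by omega)⟩
  rw [← wordSum.sum_antidiagonal] at huv ⊢
  rw [← conjEigenspace.sum_filter_eq_sum hx
      (fun ab _ => wordSum.mem_conjEigenspace hu hv ab.1 ab.2) huv,
    hfilter, sum_pair (by simp [hp.ne_zero]), wordSum.zero_right, wordSum.zero_left]

theorem minpoly_eq_X_pow_sub_C {p : ℕ} (hp : p.Prime) {ρ : F} (hρ : IsPrimitiveRoot ρ p)
    {x : D} {α : F} (hxp : x ^ p = algebraMap F D α) (hxnc : ∀ s : F, x ≠ algebraMap F D s) :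
    minpoly F x = X ^ p - C α := by
  have hroot : aeval x (X ^ p - C α) = 0 := by simp [hxp]
  have hmonic : (X ^ p - C α).Monic := monic_X_pow_sub_C α hp.ne_zero
  -- A `p`-th root of `α` in `F` would make `X ^ p - C α` split, forcing `x ∈ F`.
  have hirr : Irreducible (X ^ p - C α) := by
    rw [X_pow_sub_C_irreducible_iff_of_prime hp]
    intro b hb
    have hdeg := ((X_pow_sub_C_splits_of_isPrimitiveRoot hρ hb).of_dvd
      (X_pow_sub_C_ne_zero hp.pos α) (minpoly.dvd F x hroot)).degree_eq_one_of_irreducible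
      (minpoly.irreducible ⟨_, hmonic, hroot⟩)
    obtain ⟨s, hs⟩ := minpoly.mem_range_of_degree_eq_one F x hdeg
    exact hxnc s hs.symm
  exact (minpoly.eq_of_irreducible_of_monic hirr hroot hmonic).symm

theorem linearIndependent_pow_of_pow_eq_algebraMap {p : ℕ} (hp : p.Prime) {ρ : F}
    (hρ : IsPrimitiveRoot ρ p) {x : D} {α : F} (hxp : x ^ p = algebraMap F D α)
    (hxnc : ∀ s : F, x ≠ algebraMap F D s) :
    LinearIndependent F fun k : Fin p => x ^ (k : ℕ) := by
  have h := linearIndependent_pow (K := F) x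
  rwa [minpoly_eq_X_pow_sub_C hp hρ hxp hxnc, natDegree_X_pow_sub_C] at h

theorem linearIndependent_mul_pow {ι : Type*} [Fintype ι] {n : ℕ} {x y : D} {c : F}
    {b : ι → D} (hb : LinearIndependent F b) (hbx : ∀ k, Commute (b k) x) (hx : x ≠ 0)
    (hc : IsPrimitiveRoot c n) (hy : y ∈ conjEigenspace x c) (hy0 : y ≠ 0) :
    LinearIndependent F fun kl : ι × Fin n => b kl.1 * y ^ (kl.2 : ℕ) := by
  classical
  rw [Fintype.linearIndependent_iff]
  intro g hg ⟨k, l⟩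
  set W : Fin n → D := fun l => ∑ k, g (k, l) • b k
  have hsum : ∑ l : Fin n, W l * y ^ (l : ℕ) = 0 := by
    rw [← hg, Fintype.sum_prod_type_right]
    simp only [W, sum_mul, smul_mul_assoc]
  have hmem : ∀ l : Fin n, W l * y ^ (l : ℕ) ∈ conjEigenspace x (c ^ (l : ℕ)) := fun l => by
    simpa only [one_mul] using conjEigenspace.mul_mem
      (Submodule.sum_mem _ fun k _ => Submodule.smul_mem _ _
        ((conjEigenspace.mem_one_iff (F := F)).2 (hbx k)))
      (conjEigenspace.pow_mem hy l)
  have hfilter : univ.filter (fun l' : Fin n => c ^ (l' : ℕ) = c ^ (l : ℕ)) = {l} := by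
    ext l'
    simp only [mem_filter, mem_univ, true_and, mem_singleton]
    exact ⟨fun h => Fin.ext (hc.pow_inj l'.isLt l.isLt h), fun h => h ▸ rfl⟩
  have hWl : W l * y ^ (l : ℕ) = 0 := by
    have := conjEigenspace.sum_filter_eq_sum hx (fun l _ => hmem l)
      (hsum ▸ Submodule.zero_mem (conjEigenspace x (c ^ (l : ℕ))))
    rwa [hfilter, sum_singleton, hsum] at this
  exact Fintype.linearIndependent_iff.1 hb _
    ((mul_eq_zero.1 hWl).resolve_right (pow_ne_zero _ hy0)) k

theorem pow_mem_center_of_mem_conjEigenspace [FiniteDimensional F D] {n : ℕ}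
    (hdim : Module.finrank F D = n ^ 2) {x y : D} {c : F} (hx : x ≠ 0)
    (hxlin : LinearIndependent F fun k : Fin n => x ^ (k : ℕ)) (hc : IsPrimitiveRoot c n)
    (hy : y ∈ conjEigenspace x c) : y ^ n ∈ Subalgebra.center F D := by
  rcases eq_or_ne y 0 with rfl | hy0
  · exact Subalgebra.pow_mem _ (Subalgebra.zero_mem _) n
  have hyx : Commute (y ^ n) x := by
    rw [← conjEigenspace.mem_one_iff (F := F), ← hc.pow_eq_one]
    exact conjEigenspace.pow_mem hy n
  have hspan := (linearIndependent_mul_pow hxlin (fun k => (Commute.refl x).pow_left k) hx hc hy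
    hy0).span_eq_top_of_card_eq_finrank' (by simp [hdim, sq])
  have hle : Submodule.span F
      (Set.range fun kl : Fin n × Fin n => x ^ (kl.1 : ℕ) * y ^ (kl.2 : ℕ))
      ≤ Subalgebra.toSubmodule (Subalgebra.centralizer F {y ^ n}) := by
    rw [Submodule.span_le, Set.range_subset_iff]
    intro kl
    rw [SetLike.mem_coe, Subalgebra.mem_toSubmodule, Subalgebra.mem_centralizer_iff]
    rintro _ rfl
    exact ((hyx.symm.pow_left _).mul_left (Commute.pow_pow_self y _ n)).symm
  rw [Subalgebra.mem_center_iff]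
  intro b
  have hb := hle (hspan ▸ Submodule.mem_top : b ∈ _)
  exact ((Subalgebra.mem_centralizer_iff F).1 hb _ rfl).symm

end

theorem two_eigencomponents_p_central_general
    {F D : Type*} [Field F] [DivisionRing D] [Algebra F D]
    (p : ℕ) (hp : p.Prime)
    (ρ : F) (hρ : IsPrimitiveRoot ρ p)
    (hcentral : ∀ a : D, (∀ b : D, a * b = b * a) → ∃ c : F, a = algebraMap F D c)
    (hdim : Module.finrank F D = p ^ 2)
    (x z : D) (α β : F)
    (hxp : x ^ p = algebraMap F D α) (hzp : z ^ p = algebraMap F D β)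
    (hxnc : ∀ s : F, x ≠ algebraMap F D s)
    (i j : ℕ) (hi : i < p) (hj : j < p) (hij : i ≠ j)
    (zi zj : D)
    (hz : z = zi + zj)
    (hziX : zi * x = ρ ^ i • (x * zi)) (hzjX : zj * x = ρ ^ j • (x * zj)) :
    (∃ ci : F, zi ^ p = algebraMap F D ci) ∧
    (∃ cj : F, zj ^ p = algebraMap F D cj) ∧
    z ^ p = zi ^ p + zj ^ p := by
  have hx : x ≠ 0 := fun h => hxnc 0 (by rw [h, map_zero])
  have : FiniteDimensional F D := .of_finrank_pos (by rw [hdim]; exact pow_pos hp.pos 2)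
  have hroot : ∀ k, (ρ ^ k) ^ p = 1 := fun k => by
    rw [← pow_mul', pow_mul, hρ.pow_eq_one, one_pow]
  have hsum : z ^ p = zi ^ p + zj ^ p := by
    subst hz
    refine add_pow_eq_of_mem_conjEigenspace hp hx (hroot i) (hroot j)
      (fun h => hij (hρ.pow_inj hi hj h)) hziX hzjX ?_
    rw [conjEigenspace.mem_one_iff, hzp]
    exact Algebra.commutes β x
  have hxlin := linearIndependent_pow_of_pow_eq_algebraMap hp hρ hxp hxnc
  have hpow : ∀ k < p, k ≠ 0 → ∀ y ∈ conjEigenspace x (ρ ^ k),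
      ∃ c : F, y ^ p = algebraMap F D c := by
    intro k hk hk0 y hy
    have hc := hρ.pow_of_coprime k (Nat.coprime_of_lt_prime hk0 hk hp).symm
    have hcenter := pow_mem_center_of_mem_conjEigenspace hdim hx hxlin hc hy
    exact hcentral _ fun b => (Subalgebra.mem_center_iff.1 hcenter b).symm
  have hswap : (∃ ci : F, zi ^ p = algebraMap F D ci) ↔
      ∃ cj : F, zj ^ p = algebraMap F D cj := by
    constructor
    · rintro ⟨ci, hci⟩
      exact ⟨β - ci, by rw [map_sub, ← hci, ← hzp, hsum, add_sub_cancel_left]⟩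
    · rintro ⟨cj, hcj⟩
      exact ⟨β - cj, by rw [map_sub, ← hcj, ← hzp, hsum, add_sub_cancel_right]⟩
  rcases eq_or_ne i 0 with rfl | hi0
  · have hzj := hpow j hj (Ne.symm hij) zj hzjX
    exact ⟨hswap.2 hzj, hzj, hsum⟩
  · have hzi := hpow i hi hi0 zi hziX
    exact ⟨hzi, hswap.1 hzi, hsum⟩

/-- In a central division algebra of prime degree `p`, if a `p`-central element `z`
has exactly two eigencomponents with respect to conjugation by a `p`-central
element `x`, then both eigencomponents have `p`-th power in `F`, and
`z^p = z_i^p + z_j^p`. -/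
theorem two_eigencomponents_p_central
    {F D : Type*} [Field F] [DivisionRing D] [Algebra F D]
    (p : ℕ) (hp : p.Prime) (hpF : (p : F) ≠ 0)
    (ρ : F) (hρ : IsPrimitiveRoot ρ p)
    (hcentral : ∀ a : D, (∀ b : D, a * b = b * a) → ∃ c : F, a = algebraMap F D c)
    (hdim : Module.finrank F D = p ^ 2)
    (x z : D) (α β : F) (hα : α ≠ 0) (hβ : β ≠ 0)
    (hxp : x ^ p = algebraMap F D α) (hzp : z ^ p = algebraMap F D β)
    (hxnc : ∀ s : F, x ≠ algebraMap F D s) (hznc : ∀ s : F, z ≠ algebraMap F D s)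
    (i j : ℕ) (hi : i < p) (hj : j < p) (hij : i ≠ j)
    (zi zj : D) (hzi0 : zi ≠ 0) (hzj0 : zj ≠ 0)
    (hz : z = zi + zj)
    (hziX : zi * x = ρ ^ i • (x * zi)) (hzjX : zj * x = ρ ^ j • (x * zj)) :
    (∃ ci : F, zi ^ p = algebraMap F D ci) ∧
    (∃ cj : F, zj ^ p = algebraMap F D cj) ∧
    z ^ p = zi ^ p + zj ^ p :=
  two_eigencomponents_p_central_general p hp ρ hρ hcentral hdim x z α β hxp hzp hxnc i j hi hj hij
    zi zj hz hziX hzjX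
end

section
/- With the hypotheses of the previous statement (z = z_i + z_j a p-central element with exactly two eigencomponents for conjugation by the p-central element x in a division algebra of degree p), the F-span F z_i + F z_j is a p-central space with diagonal exponentiation form: for all u, v ∈ F, (u z_i + v z_j)^p = u^p z_i^p + v^p z_j^p. -/
/-! Conjugation by `x` scales `z_i` and `z_j` by `ρ^i` and `ρ^j` and fixes `z^p = β`, so
`(ω^k z_i + z_j)^p = β` for every power of the primitive `p`-th root `ω = ρ^i / ρ^j`. Hence
`q(t) = (t z_i + z_j)^p`, a polynomial in the central variable `t` with coefficients in `D`, is
constant on the `p`-th roots of unity, and its discrete Fourier coefficients kill every coefficient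
except those of `t^0` and `t^p`, which are `z_j^p` and `z_i^p`. -/

open Finset

theorem IsPrimitiveRoot.geom_sum_pow_eq_zero {R : Type*} [CommRing R] [IsDomain R] {ζ : R}
    {n d : ℕ} (hζ : IsPrimitiveRoot ζ n) (hd : ¬n ∣ d) :
    ∑ k ∈ range n, (ζ ^ d) ^ k = 0 := by
  have hne : ζ ^ d ≠ 1 := fun h => hd ((hζ.pow_eq_one_iff_dvd d).mp h)
  refine eq_zero_of_ne_zero_of_mul_left_eq_zero (sub_ne_zero_of_ne hne.symm) ?_
  rw [mul_neg_geom_sum, ← pow_mul, mul_comm, pow_mul, hζ.pow_eq_one, one_pow, sub_self]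

theorem IsPrimitiveRoot.pow_div_pow {F : Type*} [Field F] {ρ : F} {p i j : ℕ}
    (hρ : IsPrimitiveRoot ρ p) (hp : p.Prime) (hi : i < p) (hj : j < p) (hij : i ≠ j) :
    IsPrimitiveRoot (ρ ^ i / ρ ^ j) p := by
  refine isPrimitiveRoot_of_mem_nthRootsFinset hp
    ((Polynomial.mem_nthRootsFinset hp.pos 1).2 ?_) ?_
  · rw [div_pow, ← pow_mul, ← pow_mul, mul_comm i, mul_comm j, pow_mul, pow_mul,
      hρ.pow_eq_one, one_pow, one_pow, div_one]
  · rw [Ne, div_eq_one_iff_eq (pow_ne_zero j (hρ.ne_zero hp.ne_zero))]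
    exact fun h => hij (hρ.pow_inj hi hj h)

section Polynomial

open Polynomial

theorem Polynomial.eval_algebraMap_linear_pow {R A : Type*} [CommSemiring R] [Semiring A]
    [Algebra R A] (a b : A) (t : R) (n : ℕ) :
    ((C a * X + C b) ^ n).eval (algebraMap R A t) = (t • a + b) ^ n := by
  let ev := eval₂RingHom' (RingHom.id A) (algebraMap R A t) fun d => (Algebra.commutes t d).symm
  change ev ((C a * X + C b) ^ n) = _
  rw [map_pow, map_add, map_mul, Algebra.smul_def, Algebra.commutes]
  simp [ev, eval₂RingHom']

variable {F A : Type*} [Field F] [Ring A] [Algebra F A]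

theorem Polynomial.coeff_eq_zero_of_eval_pow_eq {ω : F} {n : ℕ} [NeZero n]
    (hω : IsPrimitiveRoot ω n) {q : A[X]} (hq : q.natDegree ≤ n) {c : A}
    (h : ∀ k, q.eval (algebraMap F A (ω ^ k)) = c) {m : ℕ} (hm0 : 0 < m) (hmn : m < n) :
    q.coeff m = 0 := by
  have heval : ∀ k, q.eval (algebraMap F A (ω ^ k)) =
      ∑ b ∈ range (n + 1), (ω ^ b) ^ k • q.coeff b := by
    intro k
    rw [eval_eq_sum_range' (Nat.lt_succ_of_le hq)]
    refine sum_congr rfl fun b _ => ?_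
    rw [← map_pow, ← Algebra.commutes, ← Algebra.smul_def, ← pow_mul, ← pow_mul, mul_comm]
  have hvanish : ∀ b ≤ n, b ≠ m → ¬n ∣ n - m + b := by
    intro b hb hbm
    rcases lt_or_gt_of_ne hbm with hlt | hgt
    · exact Nat.not_dvd_of_pos_of_lt (by omega) (by omega)
    · rw [show n - m + b = n + (b - m) by omega, Nat.dvd_add_right (dvd_refl n)]
      exact Nat.not_dvd_of_pos_of_lt (by omega) (by omega)
  -- the weight `ω ^ (n - m)` is `ω⁻¹ ^ m`, so this is the `m`-th Fourier coefficient
  have hfourier : ∑ k ∈ range n, (ω ^ (n - m)) ^ k • q.eval (algebraMap F A (ω ^ k))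
      = (n : F) • q.coeff m := by
    simp_rw [heval, smul_sum, smul_smul, ← mul_pow, ← pow_add]
    rw [sum_comm, sum_eq_single m]
    · rw [← sum_smul, Nat.sub_add_cancel hmn.le, hω.pow_eq_one]
      simp
    · intro b hb hbm
      have hbn : b ≤ n := Nat.lt_succ_iff.mp (mem_range.mp hb)
      rw [← sum_smul, hω.geom_sum_pow_eq_zero (hvanish b hbn hbm), zero_smul]
    · intro hm
      exact absurd (mem_range.mpr (by omega)) hm
  have hzero : ∑ k ∈ range n, (ω ^ (n - m)) ^ k • q.eval (algebraMap F A (ω ^ k)) = 0 := by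
    simp_rw [h]
    rw [← sum_smul, hω.geom_sum_pow_eq_zero, zero_smul]
    exact Nat.not_dvd_of_pos_of_lt (by omega) (by omega)
  rw [hzero, eq_comm, smul_eq_zero] at hfourier
  exact hfourier.resolve_left hω.neZero'.out

theorem smul_add_pow_eq_of_pow_eq_on_rootsOfUnity {ω : F} {n : ℕ} [NeZero n]
    (hω : IsPrimitiveRoot ω n) {a b c : A} (h : ∀ k, (ω ^ k • a + b) ^ n = c) (t : F) :
    (t • a + b) ^ n = t ^ n • a ^ n + b ^ n := by
  have hq : ((C a * X + C b) ^ n).natDegree ≤ n :=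
    natDegree_pow_le_of_le n natDegree_linear_le |>.trans_eq (mul_one n)
  have hcoeff_zero : ((C a * X + C b) ^ n).coeff 0 = b ^ n := by
    rw [coeff_zero_eq_eval_zero, ← map_zero (algebraMap F A), eval_algebraMap_linear_pow,
      zero_smul, zero_add]
  have hcoeff_top : ((C a * X + C b) ^ n).coeff n = a ^ n := by
    simpa using coeff_pow_of_natDegree_le (m := n) (natDegree_linear_le (a := a) (b := b))
  have hmiddle : ∀ m, 0 < m → m < n → ((C a * X + C b) ^ n).coeff m = 0 := fun m hm0 hmn =>
    coeff_eq_zero_of_eval_pow_eq hω hq (fun k => (eval_algebraMap_linear_pow a b _ n).trans (h k))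
      hm0 hmn
  have hlow : ∑ m ∈ range n, ((C a * X + C b) ^ n).coeff m * algebraMap F A t ^ m = b ^ n := by
    rw [sum_eq_single 0 (fun m hm hm0 => by
        rw [hmiddle m (Nat.pos_of_ne_zero hm0) (mem_range.1 hm), zero_mul])
      (fun h0 => absurd (mem_range.2 (NeZero.pos n)) h0), hcoeff_zero, pow_zero, mul_one]
  rw [← eval_algebraMap_linear_pow, eval_eq_sum_range' (Nat.lt_succ_of_le hq), sum_range_succ,
    hlow, hcoeff_top, ← map_pow, ← Algebra.commutes, ← Algebra.smul_def, add_comm]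

end Polynomial

theorem smul_add_smul_pow_eq_of_smul_add_pow_eq {F A : Type*} [Field F] [Ring A] [Algebra F A]
    {n : ℕ} [NeZero n] {a b : A}
    (h : ∀ t : F, (t • a + b) ^ n = t ^ n • a ^ n + b ^ n) (u v : F) :
    (u • a + v • b) ^ n = u ^ n • a ^ n + v ^ n • b ^ n := by
  rcases eq_or_ne v 0 with rfl | hv
  · simp [smul_pow, zero_pow (NeZero.ne n)]
  · calc (u • a + v • b) ^ n = (v • ((u / v) • a + b)) ^ n := by
          rw [smul_add, smul_smul, mul_div_cancel₀ u hv]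
      _ = u ^ n • a ^ n + v ^ n • b ^ n := by
          rw [smul_pow, h, smul_add, smul_smul, ← mul_pow, mul_div_cancel₀ u hv]

section Conjugation

variable {F D : Type*} [Field F] [DivisionRing D] [Algebra F D]

theorem smul_add_smul_pow_eq_of_conj {x a b : D} {s r : F} {n : ℕ} (hx : x ≠ 0)
    (ha : a * x = s • (x * a)) (hb : b * x = r • (x * b)) (hc : Commute x ((a + b) ^ n))
    (k : ℕ) : (s ^ k • a + r ^ k • b) ^ n = (a + b) ^ n := by
  have hconj : ∀ (c : F) {e : D}, e * x = c • (x * e) → x⁻¹ * e * x = c • e := by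
    intro c e he
    rw [mul_assoc, he, mul_smul_comm, inv_mul_cancel_left₀ hx]
  induction k with
  | zero => simp
  | succ k ih =>
    have hstep : s ^ (k + 1) • a + r ^ (k + 1) • b =
        x⁻¹ * (s ^ k • a + r ^ k • b) * x := by
      rw [mul_add, add_mul, mul_smul_comm, smul_mul_assoc, hconj s ha, mul_smul_comm,
        smul_mul_assoc, hconj r hb, smul_smul, smul_smul, pow_succ, pow_succ]
    rw [hstep, GroupWithZero.conj_pow₀ hx, ih, mul_assoc, ← hc.eq, inv_mul_cancel_left₀ hx]

theorem div_pow_smul_add_pow_eq_of_conj {x a b : D} {s r : F} {n : ℕ} (hx : x ≠ 0)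
    (hr : r ^ n = 1) (ha : a * x = s • (x * a)) (hb : b * x = r • (x * b))
    (hc : Commute x ((a + b) ^ n)) (k : ℕ) : ((s / r) ^ k • a + b) ^ n = (a + b) ^ n := by
  rcases eq_or_ne n 0 with rfl | hn
  · simp
  have hr0 : r ≠ 0 := by rintro rfl; simp [hn] at hr
  calc ((s / r) ^ k • a + b) ^ n = (r ^ k • ((s / r) ^ k • a + b)) ^ n := by
        rw [smul_pow, ← pow_mul, mul_comm, pow_mul, hr, one_pow, one_smul]
    _ = (a + b) ^ n := by
        rw [smul_add, smul_smul, ← mul_pow, mul_div_cancel₀ s hr0,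
          smul_add_smul_pow_eq_of_conj hx ha hb hc]

end Conjugation

theorem two_eigencomponents_diagonal_form_general
    {F D : Type*} [Field F] [DivisionRing D] [Algebra F D]
    (p : ℕ) (hp : p.Prime)
    (ρ : F) (hρ : IsPrimitiveRoot ρ p)
    (x z : D) (β : F)
    (hzp : z ^ p = algebraMap F D β)
    (hxnc : ∀ s : F, x ≠ algebraMap F D s)
    (i j : ℕ) (hi : i < p) (hj : j < p) (hij : i ≠ j)
    (zi zj : D)
    (hz : z = zi + zj)
    (hziX : zi * x = ρ ^ i • (x * zi)) (hzjX : zj * x = ρ ^ j • (x * zj)) :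
    ∀ u v : F, (u • zi + v • zj) ^ p = u ^ p • zi ^ p + v ^ p • zj ^ p := by
  have : NeZero p := ⟨hp.ne_zero⟩
  have hx : x ≠ 0 := fun h => hxnc 0 (by rw [h, map_zero])
  have hρj : (ρ ^ j) ^ p = 1 := by rw [← pow_mul, mul_comm, pow_mul, hρ.pow_eq_one, one_pow]
  have hc : Commute x ((zi + zj) ^ p) := by
    rw [← hz, hzp]
    exact Algebra.commute_algebraMap_right β x
  exact smul_add_smul_pow_eq_of_smul_add_pow_eq
    (smul_add_pow_eq_of_pow_eq_on_rootsOfUnity (hρ.pow_div_pow hp hi hj hij)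
      (div_pow_smul_add_pow_eq_of_conj hx hρj hziX hzjX hc))

/-- In a central division algebra of prime degree `p`, if a `p`-central element `z`
has exactly two eigencomponents `z_i, z_j` with respect to conjugation by a
`p`-central element `x`, then `F z_i + F z_j` is a `p`-central space with diagonal
exponentiation form: `(u z_i + v z_j)^p = u^p z_i^p + v^p z_j^p`. -/
theorem two_eigencomponents_diagonal_form
    {F D : Type*} [Field F] [DivisionRing D] [Algebra F D]
    (p : ℕ) (hp : p.Prime) (hpF : (p : F) ≠ 0)
    (ρ : F) (hρ : IsPrimitiveRoot ρ p)
    (hcentral : ∀ a : D, (∀ b : D, a * b = b * a) → ∃ c : F, a = algebraMap F D c)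
    (hdim : Module.finrank F D = p ^ 2)
    (x z : D) (α β : F) (hα : α ≠ 0) (hβ : β ≠ 0)
    (hxp : x ^ p = algebraMap F D α) (hzp : z ^ p = algebraMap F D β)
    (hxnc : ∀ s : F, x ≠ algebraMap F D s) (hznc : ∀ s : F, z ≠ algebraMap F D s)
    (i j : ℕ) (hi : i < p) (hj : j < p) (hij : i ≠ j)
    (zi zj : D) (hzi0 : zi ≠ 0) (hzj0 : zj ≠ 0)
    (hz : z = zi + zj)
    (hziX : zi * x = ρ ^ i • (x * zi)) (hzjX : zj * x = ρ ^ j • (x * zj)) :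
    ∀ u v : F, (u • zi + v • zj) ^ p = u ^ p • zi ^ p + v ^ p • zj ^ p :=
  two_eigencomponents_diagonal_form_general p hp ρ hρ x z β hzp hxnc i j hi hj hij zi zj hz hziX
    hzjX
end

section
/- Let D be a central division algebra of prime degree p over F (char F ∤ p, ρ ∈ F a primitive p-th root of unity) and let x, z ∈ D be p-central with z = z_i + z_j (exactly two eigencomponents with respect to conjugation by x, indices i ≠ j) and x = x_m + x_n (exactly two eigencomponents with respect to conjugation by z). Then {m, n} = {-i, -j} mod p, and moreover x_i x_j = ρ^{j-i} x_j x_i and z_{-i} z_{-j} = ρ^{i-j} z_{-j} z_{-i}. -/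
/-!
If `x = x_m + x_n` with `x_k z = ρ^k z x_k`, then `x z² - (ρ^m + ρ^n) z x z + ρ^(m+n) z² x = 0`.
Substituting `z = z_i + z_j` and moving `x` to the left via `z_k x = ρ^k x z_k` turns this into
`x · ∑ c_kl z_k z_l = 0` with `c_kk = (1 - ρ^(m+k)) (1 - ρ^(n+k))`. For odd `p` the products
`z_i²`, `z_i z_j`, `z_j z_i`, `z_j²` lie in eigenspaces of conjugation by `x` for the distinct
eigenvalues `ρ^(2i)`, `ρ^(i+j)`, `ρ^(2j)`, so `c_ii = c_jj = 0`, i.e. `{m, n} = {-i, -j}`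
(for `p = 2` this is automatic). Once the indices are paired, what is left of the relation is
`(1 - ρ^(i-j)) z_i z_j + (1 - ρ^(j-i)) z_j z_i = 0`; exchanging `x` and `z` gives the
`ρ`-commutation of `x_m` and `x_n`.
-/

theorem Module.End.eq_zero_of_add_add_eq_zero_of_mem_eigenspace {R M : Type*} [CommRing R]
    [IsDomain R] [AddCommGroup M] [Module R M] [Module.IsTorsionFree R M] {f : Module.End R M}
    {l₁ l₂ l₃ : R} {w₁ w₂ w₃ : M} (h₁ : w₁ ∈ f.eigenspace l₁) (h₂ : w₂ ∈ f.eigenspace l₂)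
    (h₃ : w₃ ∈ f.eigenspace l₃) (h₁₂ : l₁ ≠ l₂) (h₁₃ : l₁ ≠ l₃) (hsum : w₁ + w₂ + w₃ = 0) :
    w₁ = 0 := by
  refine Submodule.disjoint_def.mp (f.eigenspaces_iSupIndep l₁) w₁ h₁ ?_
  rw [eq_neg_of_add_eq_zero_left ((add_assoc w₁ w₂ w₃).symm.trans hsum)]
  exact neg_mem (add_mem (Submodule.mem_iSup_of_mem l₂ (Submodule.mem_iSup_of_mem h₁₂.symm h₂))
    (Submodule.mem_iSup_of_mem l₃ (Submodule.mem_iSup_of_mem h₁₃.symm h₃)))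

namespace IsPrimitiveRoot

variable {F : Type*} [Field F] {ρ : F} {p : ℕ} [NeZero p]

theorem pow_val_add (hρ : IsPrimitiveRoot ρ p) (a b : ZMod p) :
    ρ ^ (a + b).val = ρ ^ a.val * ρ ^ b.val := by
  rw [ZMod.val_add, ← pow_eq_pow_mod _ hρ.pow_eq_one, pow_add]

theorem pow_val_injective (hρ : IsPrimitiveRoot ρ p) :
    Function.Injective fun a : ZMod p => ρ ^ a.val :=
  fun a b h => ZMod.val_injective p (hρ.pow_inj a.val_lt b.val_lt h)

theorem pow_val_neg_mul (hρ : IsPrimitiveRoot ρ p) (a : ZMod p) :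
    ρ ^ (-a).val * ρ ^ a.val = 1 := by
  rw [← hρ.pow_val_add, neg_add_cancel, ZMod.val_zero, pow_zero]

theorem eq_neg_of_pow_val_mul_eq_one (hρ : IsPrimitiveRoot ρ p) {a b : ZMod p}
    (h : ρ ^ a.val * ρ ^ b.val = 1) : a = -b :=
  eq_neg_of_add_eq_zero_left <| hρ.pow_val_injective <| by
    simp only [hρ.pow_val_add, h, ZMod.val_zero, pow_zero]

end IsPrimitiveRoot

section TwistedCommutation

variable {R A : Type*} [CommRing R] [Ring A] [Algebra R A]

theorem twisted_mul {x u v : A} {c d : R} (hu : u * x = c • (x * u)) (hv : v * x = d • (x * v)) :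
    u * v * x = (c * d) • (x * (u * v)) := by
  rw [mul_assoc, hv, mul_smul_comm, ← mul_assoc, hu, smul_mul_assoc, smul_smul, mul_comm d c,
    mul_assoc]

/-- A sum of two eigenvectors of eigenvalues `a`, `b` is killed by `(T - a S) (T - b S)`, where
`S` and `T` are the commuting operators of left and right multiplication by `z`. -/
theorem twisted_quadratic {z u v : A} {a b : R} (hu : u * z = a • (z * u))
    (hv : v * z = b • (z * v)) :
    (u + v) * z * z - (a + b) • (z * (u + v) * z) + (a * b) • (z * z * (u + v)) = 0 := by
  have key : ∀ {w : A} {c : R}, w * z = c • (z * w) →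
      w * z * z = (c * c) • (z * z * w) ∧ z * w * z = c • (z * z * w) := by
    intro w c hw
    constructor
    · rw [hw, smul_mul_assoc, mul_assoc, hw, mul_smul_comm, smul_smul, ← mul_assoc]
    · rw [mul_assoc, hw, mul_smul_comm, ← mul_assoc]
  obtain ⟨hu₁, hu₂⟩ := key hu
  obtain ⟨hv₁, hv₂⟩ := key hv
  simp only [add_mul, mul_add]
  rw [hu₁, hu₂, hv₁, hv₂]
  module

theorem twisted_expand {x u v : A} {c d : R} (e f : R) (hu : u * x = c • (x * u))
    (hv : v * x = d • (x * v)) :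
    x * (u + v) * (u + v) - e • ((u + v) * x * (u + v)) + f • ((u + v) * (u + v) * x) =
      x * ((1 - e * c + f * (c * c)) • (u * u) + (1 - e * c + f * (c * d)) • (u * v) +
        (1 - e * d + f * (d * c)) • (v * u) + (1 - e * d + f * (d * d)) • (v * v)) := by
  simp only [add_mul, mul_add]
  rw [twisted_mul hu hu, twisted_mul hu hv, twisted_mul hv hu, twisted_mul hv hv, hu, hv]
  simp only [smul_mul_assoc, mul_smul_comm, mul_assoc]
  module

end TwistedCommutation

section DivisionAlgebra

variable {F D : Type*} [Field F] [DivisionRing D] [Algebra F D]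

def conjEnd (x : D) : Module.End F D := LinearMap.mulLeft F x⁻¹ ∘ₗ LinearMap.mulRight F x

theorem mem_eigenspace_conjEnd {x w : D} {c : F} (hx : x ≠ 0) :
    w ∈ (conjEnd x).eigenspace c ↔ w * x = c • (x * w) := by
  rw [Module.End.mem_eigenspace_iff, conjEnd, LinearMap.comp_apply, LinearMap.mulRight_apply,
    LinearMap.mulLeft_apply, inv_mul_eq_iff_eq_mul₀ hx, mul_smul_comm]

variable {x z u v u' v' : D} {a b c d : F}

theorem twisted_relation (hx0 : x ≠ 0) (hz : z = u + v) (hx : x = u' + v')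
    (hu : u * x = c • (x * u)) (hv : v * x = d • (x * v))
    (hu' : u' * z = a • (z * u')) (hv' : v' * z = b • (z * v')) :
    (1 - (a + b) * c + a * b * (c * c)) • (u * u) + (1 - (a + b) * c + a * b * (c * d)) • (u * v)
      + (1 - (a + b) * d + a * b * (d * c)) • (v * u)
      + (1 - (a + b) * d + a * b * (d * d)) • (v * v) = 0 := by
  have hq := twisted_quadratic hu' hv'
  rw [← hx, hz, twisted_expand (a + b) (a * b) hu hv] at hq
  exact (mul_eq_zero.mp hq).resolve_left hx0

theorem twisted_eigenvalue_pairing (hx0 : x ≠ 0) (hu0 : u ≠ 0) (hz : z = u + v)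
    (hx : x = u' + v') (hu : u * x = c • (x * u)) (hv : v * x = d • (x * v))
    (hu' : u' * z = a • (z * u')) (hv' : v' * z = b • (z * v'))
    (hcd : c * c ≠ c * d) (hdd : c * c ≠ d * d) :
    a * c = 1 ∨ b * c = 1 := by
  have hE : ∀ {w : D} {l : F}, w * x = l • (x * w) → w ∈ (conjEnd x).eigenspace l :=
    (mem_eigenspace_conjEnd hx0).mpr
  have hvu : v * u * x = (c * d) • (x * (v * u)) := by rw [twisted_mul hv hu, mul_comm]
  have hsq := Module.End.eq_zero_of_add_add_eq_zero_of_mem_eigenspace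
    (Submodule.smul_mem _ _ (hE (twisted_mul hu hu)))
    (add_mem (Submodule.smul_mem _ _ (hE (twisted_mul hu hv))) (Submodule.smul_mem _ _ (hE hvu)))
    (Submodule.smul_mem _ _ (hE (twisted_mul hv hv))) hcd hdd
    (by rw [← add_assoc]; exact twisted_relation hx0 hz hx hu hv hu' hv')
  have hcoeff := (smul_eq_zero.mp hsq).resolve_right (mul_ne_zero hu0 hu0)
  have hfactor : (1 - a * c) * (1 - b * c) = 0 := by linear_combination hcoeff
  rcases mul_eq_zero.mp hfactor with h | h
  · exact .inl (sub_eq_zero.mp h).symm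
  · exact .inr (sub_eq_zero.mp h).symm

theorem twisted_mul_comm_of_pairing (hx0 : x ≠ 0) (hz : z = u + v) (hx : x = u' + v')
    (hu : u * x = c • (x * u)) (hv : v * x = d • (x * v))
    (hu' : u' * z = a • (z * u')) (hv' : v' * z = b • (z * v'))
    (hac : a * c = 1) (hbd : b * d = 1) (hcd : c ≠ d) :
    u * v = (a * d) • (v * u) := by
  have hW := twisted_relation hx0 hz hx hu hv hu' hv'
  have hbc : 1 - b * c ≠ 0 := fun h ↦ hcd <| by linear_combination -c * hbd - d * h
  have h : (1 - b * c) • (u * v - (a * d) • (v * u)) = 0 := by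
    linear_combination (norm := module) hW + ((1 - b * c) * hac) • (u * u)
      - ((a * c) * hbd) • (u * v) + hbd • (v * u) + ((1 - a * d) * hbd) • (v * v)
  exact sub_eq_zero.mp ((smul_eq_zero.mp h).resolve_left hbc)

end DivisionAlgebra

theorem ZMod.two_eq_neg_pair :
    ∀ a b c d : ZMod 2, a ≠ b → c ≠ d → (c = -a ∧ d = -b) ∨ (c = -b ∧ d = -a) := by
  decide

section RootsOfUnity

variable {F D : Type*} [Field F] [DivisionRing D] [Algebra F D] {p : ℕ} {ρ : F}
  {x z u v u' v' : D} {i j m n : ZMod p}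

theorem twisted_mul_comm_of_index_pairing [NeZero p] (hρ : IsPrimitiveRoot ρ p) (hij : i ≠ j)
    (hx0 : x ≠ 0) (hz : z = u + v) (hx : x = u' + v')
    (hu : u * x = ρ ^ i.val • (x * u)) (hv : v * x = ρ ^ j.val • (x * v))
    (hu' : u' * z = ρ ^ (-i).val • (z * u')) (hv' : v' * z = ρ ^ (-j).val • (z * v')) :
    u * v = ρ ^ (j - i).val • (v * u) := by
  rw [sub_eq_neg_add, hρ.pow_val_add]
  exact twisted_mul_comm_of_pairing hx0 hz hx hu hv hu' hv' (hρ.pow_val_neg_mul i)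
    (hρ.pow_val_neg_mul j) (hρ.pow_val_injective.ne hij)

theorem twisted_index_pairing (hp : p.Prime) (hρ : IsPrimitiveRoot ρ p) (hij : i ≠ j)
    (hmn : m ≠ n) (hx0 : x ≠ 0) (hu0 : u ≠ 0) (hv0 : v ≠ 0) (hz : z = u + v) (hx : x = u' + v')
    (hu : u * x = ρ ^ i.val • (x * u)) (hv : v * x = ρ ^ j.val • (x * v))
    (hu' : u' * z = ρ ^ m.val • (z * u')) (hv' : v' * z = ρ ^ n.val • (z * v')) :
    (m = -i ∧ n = -j) ∨ (m = -j ∧ n = -i) := by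
  have : Fact p.Prime := ⟨hp⟩
  rcases eq_or_ne p 2 with rfl | hp2
  · exact ZMod.two_eq_neg_pair i j m n hij hmn
  have h2 : (2 : ZMod p) ≠ 0 := Ring.two_ne_zero (by rwa [ZMod.ringChar_zmod_n])
  have hneg : ∀ {k l : ZMod p} {w w' : D}, k ≠ l → w ≠ 0 → z = w + w' →
      w * x = ρ ^ k.val • (x * w) → w' * x = ρ ^ l.val • (x * w') → m = -k ∨ n = -k := by
    intro k l w w' hkl hw0 hz' hw hw'
    have hkk : k + k ≠ k + l := fun h ↦ hkl (add_left_cancel h)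
    have hll : k + k ≠ l + l := fun h ↦ hkl (mul_left_cancel₀ h2 (by rwa [two_mul, two_mul]))
    exact (twisted_eigenvalue_pairing hx0 hw0 hz' hx hw hw' hu' hv'
      (by simpa only [← hρ.pow_val_add] using hρ.pow_val_injective.ne hkk)
      (by simpa only [← hρ.pow_val_add] using hρ.pow_val_injective.ne hll)).imp
      hρ.eq_neg_of_pow_val_mul_eq_one hρ.eq_neg_of_pow_val_mul_eq_one
  rcases hneg hij hu0 hz hu hv with hi | hi <;>
    rcases hneg hij.symm hv0 (hz.trans (add_comm u v)) hv hu with hj | hj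
  · exact absurd (neg_injective (hi.symm.trans hj)) hij
  · exact .inl ⟨hi, hj⟩
  · exact .inr ⟨hj, hi⟩
  · exact absurd (neg_injective (hi.symm.trans hj)) hij

end RootsOfUnity

theorem weight_two_two_general
    {F D : Type*} [Field F] [DivisionRing D] [Algebra F D]
    (p : ℕ) (hp : p.Prime)
    (ρ : F) (hρ : IsPrimitiveRoot ρ p)
    (x z : D)
    (hxnc : ∀ s : F, x ≠ algebraMap F D s) (hznc : ∀ s : F, z ≠ algebraMap F D s)
    (i j m n : ZMod p) (hij : i ≠ j) (hmn : m ≠ n)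
    (zi zj xm xn : D)
    (hzi0 : zi ≠ 0) (hzj0 : zj ≠ 0)
    (hz : z = zi + zj) (hx : x = xm + xn)
    (hziX : zi * x = ρ ^ i.val • (x * zi)) (hzjX : zj * x = ρ ^ j.val • (x * zj))
    (hxmZ : xm * z = ρ ^ m.val • (z * xm)) (hxnZ : xn * z = ρ ^ n.val • (z * xn)) :
    ({m, n} : Set (ZMod p)) = {-i, -j} ∧
    zi * zj = ρ ^ (j - i).val • (zj * zi) ∧
    xm * xn = ρ ^ (n - m).val • (xn * xm) := by
  have : NeZero p := ⟨hp.ne_zero⟩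
  have hx0 : x ≠ 0 := fun h ↦ hxnc 0 (by rw [h, map_zero])
  have hz0 : z ≠ 0 := fun h ↦ hznc 0 (by rw [h, map_zero])
  rcases twisted_index_pairing hp hρ hij hmn hx0 hzi0 hzj0 hz hx hziX hzjX hxmZ hxnZ with
    ⟨rfl, rfl⟩ | ⟨rfl, rfl⟩
  · exact ⟨rfl, twisted_mul_comm_of_index_pairing hρ hij hx0 hz hx hziX hzjX hxmZ hxnZ,
      twisted_mul_comm_of_index_pairing hρ (neg_injective.ne hij) hz0 hx hz hxmZ hxnZ
        (by rwa [neg_neg]) (by rwa [neg_neg])⟩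
  · exact ⟨Set.pair_comm _ _,
      twisted_mul_comm_of_index_pairing hρ hij hx0 hz (hx.trans (add_comm xm xn)) hziX hzjX
        hxnZ hxmZ,
      twisted_mul_comm_of_index_pairing hρ (neg_injective.ne hij.symm) hz0 hx
        (hz.trans (add_comm zi zj)) hxmZ hxnZ (by rwa [neg_neg]) (by rwa [neg_neg])⟩

/-- Weight `(2,2)` edges: if `z = z_i + z_j` (eigencomponents for conjugation by `x`)
and `x = x_m + x_n` (eigencomponents for conjugation by `z`), then
`{m, n} = {-i, -j}` modulo `p`, and the pairs of eigencomponents `ρ`-commute: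
`z_i z_j = ρ^{j-i} z_j z_i` and `x_m x_n = ρ^{n-m} x_n x_m`. -/
theorem weight_two_two
    {F D : Type*} [Field F] [DivisionRing D] [Algebra F D]
    (p : ℕ) (hp : p.Prime) (hpF : (p : F) ≠ 0)
    (ρ : F) (hρ : IsPrimitiveRoot ρ p)
    (hcentral : ∀ a : D, (∀ b : D, a * b = b * a) → ∃ c : F, a = algebraMap F D c)
    (hdim : Module.finrank F D = p ^ 2)
    (x z : D) (α β : F) (hα : α ≠ 0) (hβ : β ≠ 0)
    (hxp : x ^ p = algebraMap F D α) (hzp : z ^ p = algebraMap F D β)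
    (hxnc : ∀ s : F, x ≠ algebraMap F D s) (hznc : ∀ s : F, z ≠ algebraMap F D s)
    (i j m n : ZMod p) (hij : i ≠ j) (hmn : m ≠ n)
    (zi zj xm xn : D)
    (hzi0 : zi ≠ 0) (hzj0 : zj ≠ 0) (hxm0 : xm ≠ 0) (hxn0 : xn ≠ 0)
    (hz : z = zi + zj) (hx : x = xm + xn)
    (hziX : zi * x = ρ ^ i.val • (x * zi)) (hzjX : zj * x = ρ ^ j.val • (x * zj))
    (hxmZ : xm * z = ρ ^ m.val • (z * xm)) (hxnZ : xn * z = ρ ^ n.val • (z * xn)) :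
    ({m, n} : Set (ZMod p)) = {-i, -j} ∧
    zi * zj = ρ ^ (j - i).val • (zj * zi) ∧
    xm * xn = ρ ^ (n - m).val • (xn * xm) :=
  weight_two_two_general p hp ρ hρ x z hxnc hznc i j m n hij hmn zi zj xm xn hzi0 hzj0 hz hx hziX
    hzjX hxmZ hxnZ
end

section
/- Let D be a central division algebra of prime degree p over F (char F ∤ p, primitive p-th root of unity ρ ∈ F) and let x, z be p-central with z having exactly two eigencomponents z_i, z_j (i ≠ j) with respect to conjugation by x, and x having exactly two eigencomponents with respect to conjugation by z. Set y = x z - ρ^i z x. Then y = (ρ^j - ρ^i) z x_j, y is p-central, y x = ρ^{-j} x y up to the appropriate root of unity commutation (x and y ρ-commute), and z and y ρ-commute; hence x and z are connected by a chain x — y — z in which consecutive elements ρ-power-commute. -/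
/-!
Put `y = xz - ρ^i zx`. Substituting the eigencomponents of `x` gives `y = (ρ^j - ρ^i) z x_j`, and
substituting those of `z` gives `y = (ρ^j - ρ^i) z_{-j} x`; the first form makes `y` `ρ`-commute
with `z`, the second with `x`. Hence `y^p` commutes with `x` and `z`, so also with each of
`z_{-i}`, `z_{-j}` (they lie in different eigenspaces of conjugation by `x`). One of them, `u`,
`ρ`-commutes with `x` through a primitive root; then the `p^2` products `u^a x^b` are eigenvectors
for conjugation by `x` and by `u` with distinct pairs of eigenvalues, hence an `F`-basis of `D`,
and `y^p` is central.
-/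

def SkewCommute {R A : Type*} [SMul R A] [Mul A] (c : R) (a b : A) : Prop :=
  a * b = c • (b * a)

namespace SkewCommute

section Semiring

variable {R A : Type*} [CommSemiring R] [Semiring A] [Algebra R A] {a b : A} {c c' : R}

theorem pow_left (h : SkewCommute c a b) : ∀ n : ℕ, SkewCommute (c ^ n) (a ^ n) b
  | 0 => by simp [SkewCommute]
  | n + 1 => by
    unfold SkewCommute at *
    rw [pow_succ, mul_assoc, h, mul_smul_comm, ← mul_assoc, pow_left h n, smul_mul_assoc,
      smul_smul, mul_assoc, ← pow_succ, ← pow_succ']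

theorem commute_pow {n : ℕ} (h : SkewCommute c a b) (hc : c ^ n = 1) : Commute (a ^ n) b := by
  have := h.pow_left n
  rwa [hc, SkewCommute, one_smul] at this

theorem symm (h : SkewCommute c a b) (hc : c' * c = 1) : SkewCommute c' b a := by
  unfold SkewCommute at *
  rw [h, smul_smul, hc, one_smul]

theorem smul_left (h : SkewCommute c a b) (r : R) : SkewCommute c (r • a) b := by
  unfold SkewCommute at *
  rw [smul_mul_assoc, h, mul_smul_comm, smul_comm]

theorem mul_self_right (h : SkewCommute c a b) : SkewCommute c (a * b) b := by
  unfold SkewCommute at *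
  conv_lhs => rw [h, smul_mul_assoc, mul_assoc]

theorem self_mul_left (h : SkewCommute c a b) : SkewCommute c (b * a) b := by
  unfold SkewCommute at *
  rw [mul_assoc, h, mul_smul_comm]

end Semiring

section Ring

variable {R A : Type*} [CommRing R] [Ring A] [Algebra R A] {a a₁ a₂ b w : A} {c c₁ c₂ : R}

theorem commutator (h : SkewCommute c a b) (hw : Commute w b) :
    SkewCommute c (w * a - a * w) b := by
  calc (w * a - a * w) * b = w * (a * b) - (a * b) * w := by
        rw [sub_mul, mul_assoc, mul_assoc, hw.eq, ← mul_assoc a b w]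
    _ = c • (b * (w * a - a * w)) := by
        rw [h, mul_smul_comm, smul_mul_assoc, ← mul_assoc, hw.eq, mul_assoc, mul_assoc,
          ← smul_sub, mul_sub]

theorem add_mul_sub_smul_mul (h₁ : SkewCommute c₁ a₁ b) (h₂ : SkewCommute c₂ a₂ b) :
    (a₁ + a₂) * b - c₁ • (b * (a₁ + a₂)) = (c₂ - c₁) • (b * a₂) := by
  rw [add_mul, h₁, h₂, mul_add]
  module

theorem mul_add_sub_smul_mul (h₁ : SkewCommute c₁ b a₁) (h₂ : SkewCommute c₂ b a₂) :
    b * (a₁ + a₂) - c₁ • ((a₁ + a₂) * b) = (c₂ - c₁) • (a₂ * b) := by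
  rw [mul_add, h₁, h₂, add_mul]
  module

end Ring

end SkewCommute

namespace IsPrimitiveRoot

variable {M : Type*} [CommMonoid M] {ζ : M} {p : ℕ}

theorem pow_val_injective_s5 [NeZero p] (h : IsPrimitiveRoot ζ p) :
    Function.Injective fun k : ZMod p => ζ ^ k.val :=
  fun a b hab => ZMod.val_injective p (h.pow_inj (ZMod.val_lt a) (ZMod.val_lt b) hab)

theorem pow_val_mul_pow_neg_val [NeZero p] (h : IsPrimitiveRoot ζ p) (k : ZMod p) :
    ζ ^ k.val * ζ ^ (-k).val = 1 := by
  rw [← pow_add, h.pow_eq_one_iff_dvd, ← ZMod.natCast_eq_zero_iff]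
  push_cast
  simp

theorem pow_val_of_ne_zero [Fact p.Prime] (h : IsPrimitiveRoot ζ p) {k : ZMod p} (hk : k ≠ 0) :
    IsPrimitiveRoot (ζ ^ k.val) p :=
  h.pow_of_coprime _ <| Nat.Coprime.symm <| (Nat.Prime.coprime_iff_not_dvd Fact.out).2 <|
    Nat.not_dvd_of_pos_of_lt (Nat.pos_of_ne_zero ((ZMod.val_ne_zero k).2 hk)) (ZMod.val_lt k)

end IsPrimitiveRoot

section DivisionRing

variable {F D : Type*} [Field F] [DivisionRing D] [Algebra F D]

theorem mem_eigenspace_mulLeftRight_inv_iff {x d : D} {c : F} (hx : x ≠ 0) :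
    d ∈ Module.End.eigenspace (LinearMap.mulLeftRight F (x⁻¹, x)) c ↔ SkewCommute c d x := by
  rw [Module.End.mem_eigenspace_iff, LinearMap.mulLeftRight_apply, mul_assoc,
    inv_mul_eq_iff_eq_mul₀ hx, mul_smul_comm]
  rfl

theorem linearIndependent_pow_mul_pow {n : ℕ} {ζ : F} (hζ : IsPrimitiveRoot ζ n) {x u : D}
    (hx : x ≠ 0) (hu : u ≠ 0) (h : SkewCommute ζ u x) :
    LinearIndependent F fun ab : Fin n × Fin n => u ^ (ab.1 : ℕ) * x ^ (ab.2 : ℕ) := by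
  have hζ0 : ζ ≠ 0 := by
    rintro rfl
    exact mul_ne_zero hu hx (by simpa [SkewCommute] using h)
  have hxpow : LinearIndependent F fun b : Fin n => x ^ (b : ℕ) :=
    Module.End.eigenvectors_linearIndependent' (LinearMap.mulLeftRight F (u⁻¹, u))
      (fun b : Fin n => ζ⁻¹ ^ (b : ℕ)) (fun b b' hb => Fin.ext (hζ.inv.pow_inj b.2 b'.2 hb))
      _ fun b => ⟨(mem_eigenspace_mulLeftRight_inv_iff hu).2
        ((h.symm (inv_mul_cancel₀ hζ0)).pow_left b), pow_ne_zero _ hx⟩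
  rw [Fintype.linearIndependent_iff] at hxpow ⊢
  rintro g hg ⟨a, b⟩
  set P : Fin n → D := fun a => ∑ b : Fin n, g (a, b) • x ^ (b : ℕ)
  have hP : ∀ a : Fin n, SkewCommute (ζ ^ (a : ℕ)) (u ^ (a : ℕ) * P a) x := fun a => by
    have hPx : Commute (P a) x :=
      Commute.sum_left _ _ _ fun b _ => ((Commute.refl x).pow_left _).smul_left _
    unfold SkewCommute
    rw [mul_assoc, hPx.eq, ← mul_assoc, h.pow_left a, smul_mul_assoc, mul_assoc]
  have hsum : ∑ a : Fin n, u ^ (a : ℕ) * P a = 0 := by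
    rw [← hg, Fintype.sum_prod_type]
    simp only [P, Finset.mul_sum, mul_smul_comm]
  have hPa : u ^ (a : ℕ) * P a = 0 :=
    (iSupIndep_iff_finsetSum_eq_zero_imp_eq_zero _).1
      ((Module.End.eigenspaces_iSupIndep (LinearMap.mulLeftRight F (x⁻¹, x))).comp
        (f := fun a : Fin n => ζ ^ (a : ℕ)) fun a a' ha => Fin.ext (hζ.pow_inj a.2 a'.2 ha))
      Finset.univ _ (fun a _ => (mem_eigenspace_mulLeftRight_inv_iff hx).2 (hP a)) hsum a
      (Finset.mem_univ a)
  exact hxpow _ ((mul_eq_zero.1 hPa).resolve_left (pow_ne_zero _ hu)) b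

theorem SkewCommute.forall_commute {n : ℕ} [NeZero n] (hdim : Module.finrank F D = n ^ 2)
    {ζ : F} (hζ : IsPrimitiveRoot ζ n) {x u w : D} (hx : x ≠ 0) (hu : u ≠ 0)
    (h : SkewCommute ζ u x) (hwx : Commute w x) (hwu : Commute w u) (d : D) : Commute w d := by
  have hspan := (linearIndependent_pow_mul_pow hζ hx hu h).span_eq_top_of_card_eq_finrank
    (by simp [hdim, sq])
  have hle :
      Submodule.span F (Set.range fun k : Fin n × Fin n => u ^ (k.1 : ℕ) * x ^ (k.2 : ℕ)) ≤
        Subalgebra.toSubmodule (Subalgebra.centralizer F {w}) := by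
    rw [Submodule.span_le]
    rintro _ ⟨k, rfl⟩
    rw [SetLike.mem_coe, Subalgebra.mem_toSubmodule, Subalgebra.mem_centralizer_iff]
    rintro _ rfl
    exact ((hwu.pow_right _).mul_right (hwx.pow_right _)).eq
  exact Subalgebra.mem_centralizer_iff F |>.1 (hle (hspan ▸ Submodule.mem_top)) w rfl

theorem SkewCommute.commute_of_commute_add {x a b w : D} {c c' : F} (hx : x ≠ 0) (hcc' : c ≠ c')
    (ha : SkewCommute c a x) (hb : SkewCommute c' b x) (hwx : Commute w x)
    (hw : Commute w (a + b)) : Commute w a := by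
  set f : Module.End F D := LinearMap.mulLeftRight F (x⁻¹, x)
  have hba : w * b - b * w = -(w * a - a * w) := by
    have := hw.eq
    rw [mul_add, add_mul] at this
    rw [neg_sub, sub_eq_sub_iff_add_eq_add, add_comm (w * b), this]
  have hmem : w * a - a * w ∈ f.eigenspace c ⊓ f.eigenspace c' := by
    refine ⟨(mem_eigenspace_mulLeftRight_inv_iff hx).2 (ha.commutator hwx), ?_⟩
    rw [SetLike.mem_coe, ← neg_mem_iff, ← hba]
    exact (mem_eigenspace_mulLeftRight_inv_iff hx).2 (hb.commutator hwx)
  rw [(Module.End.disjoint_genEigenspace f hcc' 1 1).eq_bot, Submodule.mem_bot] at hmem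
  exact sub_eq_zero.1 hmem

theorem commute_of_commute_of_commute_add {p : ℕ} [Fact p.Prime]
    (hdim : Module.finrank F D = p ^ 2) {ρ : F} (hρ : IsPrimitiveRoot ρ p) {x a b w : D}
    {i j : ZMod p} (hij : i ≠ j) (hx : x ≠ 0) (ha : a ≠ 0) (hb : b ≠ 0)
    (hai : SkewCommute (ρ ^ i.val) a x) (hbj : SkewCommute (ρ ^ j.val) b x) (hwx : Commute w x)
    (hwab : Commute w (a + b)) (d : D) : Commute w d := by
  by_cases hi : i = 0
  · have hwb := hbj.commute_of_commute_add hx (hρ.pow_val_injective_s5.ne hij.symm) hai hwx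
      (add_comm a b ▸ hwab)
    exact hbj.forall_commute hdim (hρ.pow_val_of_ne_zero (hi ▸ hij.symm)) hx hb hwx hwb d
  · have hwa := hai.commute_of_commute_add hx (hρ.pow_val_injective_s5.ne hij) hbj hwx hwab
    exact hai.forall_commute hdim (hρ.pow_val_of_ne_zero hi) hx ha hwx hwa d

end DivisionRing

theorem rost_chain_length_two_general
    {F D : Type*} [Field F] [DivisionRing D] [Algebra F D]
    (p : ℕ) (hp : p.Prime)
    (ρ : F) (hρ : IsPrimitiveRoot ρ p)
    (hcentral : ∀ a : D, (∀ b : D, a * b = b * a) → ∃ c : F, a = algebraMap F D c)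
    (hdim : Module.finrank F D = p ^ 2)
    (x z : D)
    (hxnc : ∀ s : F, x ≠ algebraMap F D s)
    (i j : ZMod p) (hij : i ≠ j)
    (xi xj zmi zmj : D)
    (hzmi0 : zmi ≠ 0) (hzmj0 : zmj ≠ 0)
    (hx : x = xi + xj) (hz : z = zmi + zmj)
    (hxiZ : xi * z = ρ ^ i.val • (z * xi)) (hxjZ : xj * z = ρ ^ j.val • (z * xj))
    (hzmiX : zmi * x = ρ ^ (-i).val • (x * zmi))
    (hzmjX : zmj * x = ρ ^ (-j).val • (x * zmj)) :
    (x * z - ρ ^ i.val • (z * x) = (ρ ^ j.val - ρ ^ i.val) • (z * xj)) ∧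
    (∃ c : F, c ≠ 0 ∧ (x * z - ρ ^ i.val • (z * x)) ^ p = algebraMap F D c) ∧
    (∃ k : ℕ, (x * z - ρ ^ i.val • (z * x)) * x
        = ρ ^ k • (x * (x * z - ρ ^ i.val • (z * x)))) ∧
    (∃ k : ℕ, (x * z - ρ ^ i.val • (z * x)) * z
        = ρ ^ k • (z * (x * z - ρ ^ i.val • (z * x)))) := by
  have : Fact p.Prime := ⟨hp⟩
  have hx0 : x ≠ 0 := fun h => hxnc 0 (by rw [h, map_zero])
  have hyz : x * z - ρ ^ i.val • (z * x) = (ρ ^ j.val - ρ ^ i.val) • (z * xj) := by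
    rw [hx]
    exact SkewCommute.add_mul_sub_smul_mul hxiZ hxjZ
  have hyx : x * z - ρ ^ i.val • (z * x) = (ρ ^ j.val - ρ ^ i.val) • (zmj * x) := by
    rw [hz]
    exact SkewCommute.mul_add_sub_smul_mul (SkewCommute.symm hzmiX (hρ.pow_val_mul_pow_neg_val i))
      (SkewCommute.symm hzmjX (hρ.pow_val_mul_pow_neg_val j))
  set y := x * z - ρ ^ i.val • (z * x)
  have hy0 : y ≠ 0 := hyx ▸ smul_ne_zero (sub_ne_zero.2 (hρ.pow_val_injective_s5.ne hij.symm))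
    (mul_ne_zero hzmj0 hx0)
  have hyx' : SkewCommute (ρ ^ (-j).val) y x :=
    hyx ▸ (SkewCommute.mul_self_right hzmjX).smul_left _
  have hyz' : SkewCommute (ρ ^ j.val) y z := hyz ▸ (SkewCommute.self_mul_left hxjZ).smul_left _
  have hroot (k : ℕ) : (ρ ^ k) ^ p = 1 := by rw [pow_right_comm, hρ.pow_eq_one, one_pow]
  obtain ⟨c, hc⟩ := hcentral (y ^ p) fun d =>
    (commute_of_commute_of_commute_add hdim hρ (neg_injective.ne hij) hx0 hzmi0 hzmj0 hzmiX hzmjX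
      (hyx'.commute_pow (hroot _)) (hz ▸ hyz'.commute_pow (hroot _)) d).eq
  refine ⟨hyz, ⟨c, ?_, hc⟩, ⟨_, hyx'⟩, ⟨_, hyz'⟩⟩
  rintro rfl
  exact pow_ne_zero p hy0 (by rwa [map_zero] at hc)

/-- Rost chain of length 2 for an edge of weight 2 in both directions: with
`x = x_i + x_j` the eigencomponents of `x` for conjugation by `z`, and
`z = z_{-i} + z_{-j}` those of `z` for conjugation by `x`, the element
`y = xz - ρ^i zx` equals `(ρ^j - ρ^i) z x_j`, is `p`-central, and
`ρ`-power-commutes with both `x` and `z`. -/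
theorem rost_chain_length_two
    {F D : Type*} [Field F] [DivisionRing D] [Algebra F D]
    (p : ℕ) (hp : p.Prime) (hpF : (p : F) ≠ 0)
    (ρ : F) (hρ : IsPrimitiveRoot ρ p)
    (hcentral : ∀ a : D, (∀ b : D, a * b = b * a) → ∃ c : F, a = algebraMap F D c)
    (hdim : Module.finrank F D = p ^ 2)
    (x z : D) (α β : F) (hα : α ≠ 0) (hβ : β ≠ 0)
    (hxp : x ^ p = algebraMap F D α) (hzp : z ^ p = algebraMap F D β)
    (hxnc : ∀ s : F, x ≠ algebraMap F D s) (hznc : ∀ s : F, z ≠ algebraMap F D s)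
    (i j : ZMod p) (hij : i ≠ j)
    (xi xj zmi zmj : D)
    (hxi0 : xi ≠ 0) (hxj0 : xj ≠ 0) (hzmi0 : zmi ≠ 0) (hzmj0 : zmj ≠ 0)
    (hx : x = xi + xj) (hz : z = zmi + zmj)
    (hxiZ : xi * z = ρ ^ i.val • (z * xi)) (hxjZ : xj * z = ρ ^ j.val • (z * xj))
    (hzmiX : zmi * x = ρ ^ (-i).val • (x * zmi))
    (hzmjX : zmj * x = ρ ^ (-j).val • (x * zmj)) :
    (x * z - ρ ^ i.val • (z * x) = (ρ ^ j.val - ρ ^ i.val) • (z * xj)) ∧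
    (∃ c : F, c ≠ 0 ∧ (x * z - ρ ^ i.val • (z * x)) ^ p = algebraMap F D c) ∧
    (∃ k : ℕ, (x * z - ρ ^ i.val • (z * x)) * x
        = ρ ^ k • (x * (x * z - ρ ^ i.val • (z * x)))) ∧
    (∃ k : ℕ, (x * z - ρ ^ i.val • (z * x)) * z
        = ρ ^ k • (z * (x * z - ρ ^ i.val • (z * x)))) :=
  rost_chain_length_two_general p hp ρ hρ hcentral hdim x z hxnc i j hij xi xj zmi zmj hzmi0 hzmj0
    hx hz hxiZ hxjZ hzmiX hzmjX
end

section
/- Let A be a central simple algebra over an infinite field F of characteristic not 3 containing a primitive cube root of unity ρ, and let x, y, z ∈ A be 3-central elements (cubes in F^×, themselves noncentral) that are F-linearly independent, with y x = ρ x y, z x = ρ x z, and y z = ρ z y. Then F x + F y + F z is 3-central: every nonzero F-linear combination a x + b y + c z has cube in F. -/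
/-!
If `y x = ρ x y` with `1 + ρ + ρ² = 0`, the three words of `(x + y)³` with two letters `x` are
`x²y`, `ρ x²y`, `ρ² x²y`, and likewise for two letters `y`; so they cancel and
`(x + y)³ = x³ + y³`. The relation is stable under scaling and sums, so `b y + c z` satisfies it
with respect to `x`; cubing first `b y + c z` and then `a x + (b y + c z)` gives
`a³ x³ + b³ y³ + c³ z³ ∈ F`.
-/

def QCommute {R A : Type*} [CommSemiring R] [Semiring A] [Algebra R A] (ρ : R) (x y : A) :
    Prop :=
  y * x = ρ • (x * y)

namespace QCommute

variable {R A : Type*} [CommSemiring R] [Semiring A] [Algebra R A] {ρ : R} {x y : A}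

theorem smul_left (h : QCommute ρ x y) (a : R) : QCommute ρ (a • x) y := by
  rw [QCommute, mul_smul_comm, smul_mul_assoc, h, smul_comm]

theorem smul_right (h : QCommute ρ x y) (b : R) : QCommute ρ x (b • y) := by
  rw [QCommute, mul_smul_comm, smul_mul_assoc, h, smul_comm]

theorem add_right {z : A} (hy : QCommute ρ x y) (hz : QCommute ρ x z) :
    QCommute ρ x (y + z) := by
  rw [QCommute, add_mul, mul_add, smul_add, hy, hz]

theorem add_pow_three (h : QCommute ρ x y) (hρ : 1 + ρ + ρ ^ 2 = 0) :
    (x + y) ^ 3 = x ^ 3 + y ^ 3 := by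
  have hsum (v : A) : v + ρ • v + ρ ^ 2 • v = 0 := by
    rw [← one_smul R v, smul_smul, smul_smul, mul_one, mul_one, ← add_smul, ← add_smul, hρ,
      zero_smul]
  have hxyx : x * y * x = ρ • (x * x * y) := by rw [mul_assoc, h, mul_smul_comm, mul_assoc]
  have hyxx : y * x * x = ρ ^ 2 • (x * x * y) := by rw [h, smul_mul_assoc, hxyx, smul_smul, sq]
  have hyxy : y * x * y = ρ • (x * y * y) := by rw [h, smul_mul_assoc]
  have hyyx : y * y * x = ρ ^ 2 • (x * y * y) := by
    rw [mul_assoc, h, mul_smul_comm, ← mul_assoc, hyxy, smul_smul, sq]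
  calc (x + y) ^ 3
      = x ^ 3 + y ^ 3 + (x * x * y + x * y * x + y * x * x) +
          (x * y * y + y * x * y + y * y * x) := by
        simp only [pow_succ, pow_zero, one_mul, add_mul, mul_add]
        abel
    _ = x ^ 3 + y ^ 3 := by rw [hxyx, hyxx, hyxy, hyyx, hsum, hsum, add_zero, add_zero]

end QCommute

theorem three_central_triangle_acyclic_general
    {F A : Type*} [Field F] [Ring A] [Algebra F A]
    (ρ : F) (hρ : IsPrimitiveRoot ρ 3)
    (x y z : A) (αx αy αz : F)
    (hx3 : x ^ 3 = algebraMap F A αx) (hy3 : y ^ 3 = algebraMap F A αy)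
    (hz3 : z ^ 3 = algebraMap F A αz)
    (hyx : y * x = ρ • (x * y)) (hzx : z * x = ρ • (x * z))
    (hyz : y * z = ρ • (z * y)) :
    ∀ a b c : F, ∃ s : F, (a • x + b • y + c • z) ^ 3 = algebraMap F A s := by
  have hρsum : 1 + ρ + ρ ^ 2 = 0 := by
    simpa [Finset.sum_range_succ] using hρ.geom_sum_eq_zero (by norm_num)
  have hxy : QCommute ρ x y := hyx
  have hxz : QCommute ρ x z := hzx
  have hzy : QCommute ρ z y := hyz
  intro a b c
  refine ⟨a ^ 3 * αx + b ^ 3 * αy + c ^ 3 * αz, ?_⟩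
  have hx_yz : QCommute ρ (a • x) (b • y + c • z) :=
    ((hxy.smul_right b).add_right (hxz.smul_right c)).smul_left a
  rw [add_assoc, hx_yz.add_pow_three hρsum, add_comm (b • y),
    ((hzy.smul_left c).smul_right b).add_pow_three hρsum, smul_pow, smul_pow, smul_pow,
    hx3, hy3, hz3]
  simp only [Algebra.smul_def, map_add, map_mul, map_pow]
  abel

/-- Acyclic triangle of `3`-central elements: if `x, y, z` are linearly independent
`3`-central elements with `yx = ρ xy`, `zx = ρ xz`, `yz = ρ zy`, then every
`F`-linear combination of `x, y, z` has its cube in `F`. -/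
theorem three_central_triangle_acyclic
    {F A : Type*} [Field F] [Infinite F] [Ring A] [Algebra F A]
    (h3 : (3 : F) ≠ 0) (ρ : F) (hρ : IsPrimitiveRoot ρ 3)
    (hcentral : ∀ a : A, (∀ b : A, a * b = b * a) → ∃ c : F, a = algebraMap F A c)
    (x y z : A) (αx αy αz : F)
    (hx3 : x ^ 3 = algebraMap F A αx) (hy3 : y ^ 3 = algebraMap F A αy)
    (hz3 : z ^ 3 = algebraMap F A αz)
    (hxnc : ∀ s : F, x ≠ algebraMap F A s)
    (hync : ∀ s : F, y ≠ algebraMap F A s)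
    (hznc : ∀ s : F, z ≠ algebraMap F A s)
    (hind : LinearIndependent F ![x, y, z])
    (hyx : y * x = ρ • (x * y)) (hzx : z * x = ρ • (x * z))
    (hyz : y * z = ρ • (z * y)) :
    ∀ a b c : F, ∃ s : F, (a • x + b • y + c • z) ^ 3 = algebraMap F A s :=
  three_central_triangle_acyclic_general ρ hρ x y z αx αy αz hx3 hy3 hz3 hyx hzx hyz
end

section
/- Let A be a central simple algebra over an infinite field F, char F ≠ 3, with primitive cube root of unity ρ ∈ F. Suppose x, y, z are linearly independent 3-central elements with y x = ρ x y, x z = ρ z x, z y = ρ y z (a 3-cycle in the commutation graph). Then F x + F y + F z is a 3-central space if and only if x y z ∈ F. -/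
/-!
Expanding with the commutation relations gives
`(a x + b y + c z)³ = a³αx + b³αy + c³αz - 3ρ²abc · xyz`, which yields the forward
direction (take `x + y + z`) and the cubes in `F` for the converse. For non-centrality,
suppose `a x + b y + c z = s ≠ 0` with `a ≠ 0` and put `u = b y + c z`. Since `u³` and
`(s - u)³ = (a x)³` lie in `F`, so does `u (s - u)`, hence both `x u` and `u x` are scalars.
Moving `b y` and `c z` past `x` multiplies them by the distinct nontrivial cube roots `ρ`
and `ρ²`, which forces `x (b y) = x (c z) = 0`; then `a x² = s x` and `x` would be a scalar.
-/

section

variable {F A : Type*} [Field F] [Ring A] [Algebra F A]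

theorem IsPrimitiveRoot.sq_add_self_add_one {ρ : F} (hρ : IsPrimitiveRoot ρ 3) :
    ρ ^ 2 + ρ + 1 = 0 := by
  have h := hρ.geom_sum_eq_zero (by norm_num)
  simp only [Finset.sum_range_succ, Finset.sum_range_zero, pow_zero, pow_one] at h
  linear_combination h

theorem IsPrimitiveRoot.mul_eq_sq_smul_of_mul_eq_smul {ρ : F} (hρ : IsPrimitiveRoot ρ 3)
    {x z : A} (hxz : x * z = ρ • (z * x)) : z * x = ρ ^ 2 • (x * z) := by
  rw [hxz, smul_smul, ← pow_succ, hρ.pow_eq_one, one_smul]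

theorem Subalgebra.mem_bot_of_smul_mem_bot {c : F} (hc : c ≠ 0) {a : A}
    (h : c • a ∈ (⊥ : Subalgebra F A)) : a ∈ (⊥ : Subalgebra F A) :=
  (Submodule.smul_mem_iff (Subalgebra.toSubmodule ⊥) hc).mp h

theorem add_add_pow_three_of_cyclic {ρ : F} (hρ : IsPrimitiveRoot ρ 3) {x y z : A}
    (hyx : y * x = ρ • (x * y)) (hxz : x * z = ρ • (z * x)) (hzy : z * y = ρ • (y * z)) :
    (x + y + z) ^ 3 = x ^ 3 + y ^ 3 + z ^ 3 - (3 * ρ ^ 2) • (x * y * z) := by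
  have hρ3 := hρ.pow_eq_one
  have hρ2 := hρ.sq_add_self_add_one
  have hzx := hρ.mul_eq_sq_smul_of_mul_eq_smul hxz
  have push (u v : A) {c : F} (h : v * u = c • (u * v)) (w : A) :
      v * (u * w) = c • (u * (v * w)) := by
    rw [← mul_assoc, h, smul_mul_assoc, mul_assoc]
  simp only [pow_succ, pow_zero, one_mul, mul_add, add_mul, smul_mul_assoc, mul_smul_comm,
    smul_smul, hyx, hzx, hzy, push x y hyx, push x z hzx, push y z hzy, mul_assoc]
  match_scalars <;> grind

theorem smul_add_smul_add_smul_pow_three_of_cyclic {ρ : F} (hρ : IsPrimitiveRoot ρ 3)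
    {x y z : A} {αx αy αz : F}
    (hx3 : x ^ 3 = algebraMap F A αx) (hy3 : y ^ 3 = algebraMap F A αy)
    (hz3 : z ^ 3 = algebraMap F A αz)
    (hyx : y * x = ρ • (x * y)) (hxz : x * z = ρ • (z * x)) (hzy : z * y = ρ • (y * z))
    (a b c : F) :
    (a • x + b • y + c • z) ^ 3 = algebraMap F A (a ^ 3 * αx + b ^ 3 * αy + c ^ 3 * αz) -
      (3 * ρ ^ 2 * (a * b * c)) • (x * y * z) := by
  have scale {u v : A} (h : v * u = ρ • (u * v)) (p q : F) :
      (q • v) * (p • u) = ρ • ((p • u) * (q • v)) := by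
    simp only [smul_mul_smul_comm, h, smul_comm _ ρ, mul_comm p q]
  rw [add_add_pow_three_of_cyclic hρ (scale hyx a b) (scale hxz c a) (scale hzy b c),
    smul_pow, smul_pow, smul_pow, hx3, hy3, hz3]
  congr 1
  · simp only [Algebra.smul_def, map_add, map_mul, map_pow]
  · simp only [smul_mul_smul_comm, smul_smul]

theorem mul_eq_zero_of_mul_mem_bot {q : F} (hq : q ≠ 1) {x w : A}
    (hwx : w * x = q • (x * w)) (h : x * w ∈ (⊥ : Subalgebra F A)) : x * w = 0 := by
  obtain ⟨μ, hμ⟩ := Algebra.mem_bot.mp h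
  have h := mul_assoc w x w
  rw [hwx, smul_mul_assoc, ← hμ, ← Algebra.commutes, ← Algebra.smul_def, smul_smul,
    ← sub_eq_zero, ← sub_smul] at h
  rcases smul_eq_zero.mp h with h | h
  · rw [← hμ, show μ = 0 by grind, map_zero]
  · rw [h, mul_zero]

theorem mul_eq_zero_of_mul_add_mem_bot {p q : F} (hq : q ≠ 1) (hpq : p ≠ q) {x v w : A}
    (hvx : v * x = p • (x * v)) (hwx : w * x = q • (x * w))
    (hl : x * (v + w) ∈ (⊥ : Subalgebra F A)) (hr : (v + w) * x ∈ (⊥ : Subalgebra F A)) :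
    x * w = 0 := by
  have hw : (q - p) • (x * w) = (v + w) * x - p • (x * (v + w)) := by
    rw [add_mul, mul_add, hvx, hwx, smul_add, sub_smul]
    abel
  refine mul_eq_zero_of_mul_mem_bot hq hwx
    (Subalgebra.mem_bot_of_smul_mem_bot (sub_ne_zero.mpr hpq.symm) ?_)
  rw [hw]
  exact sub_mem hr (Subalgebra.smul_mem _ hl p)

theorem mul_sub_mem_bot_of_pow_three_mem_bot {s : F} (h3s : 3 * s ≠ 0) {u : A}
    (hu : u ^ 3 ∈ (⊥ : Subalgebra F A))
    (hsu : (algebraMap F A s - u) ^ 3 ∈ (⊥ : Subalgebra F A)) :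
    u * (algebraMap F A s - u) ∈ (⊥ : Subalgebra F A) := by
  have key : (3 * s) • (u * (algebraMap F A s - u)) =
      algebraMap F A (s ^ 3) - u ^ 3 - (algebraMap F A s - u) ^ 3 := by
    simp only [Algebra.algebraMap_eq_smul_one, pow_succ, pow_zero, one_mul, sub_mul, mul_sub,
      smul_mul_assoc, mul_smul_comm, mul_one, smul_smul, smul_sub]
    match_scalars <;> ring
  refine Subalgebra.mem_bot_of_smul_mem_bot h3s ?_
  rw [key]
  exact sub_mem (sub_mem (Subalgebra.algebraMap_mem _ _) hu) hsu

theorem mul_mem_bot_and_mem_bot_of_smul_add_eq_algebraMap {a s : F} (ha : a ≠ 0)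
    (h3s : 3 * s ≠ 0) {x u : A} (hx3 : x ^ 3 ∈ (⊥ : Subalgebra F A))
    (hu3 : u ^ 3 ∈ (⊥ : Subalgebra F A)) (hxu : a • x + u = algebraMap F A s) :
    x * u ∈ (⊥ : Subalgebra F A) ∧ u * x ∈ (⊥ : Subalgebra F A) := by
  have hax : a • x = algebraMap F A s - u := eq_sub_of_add_eq hxu
  have hsu3 : (algebraMap F A s - u) ^ 3 ∈ (⊥ : Subalgebra F A) := by
    rw [← hax, smul_pow]
    exact Subalgebra.smul_mem _ hx3 _
  -- `u` commutes with `a x = s - u`, so `u (s - u)` is both `a (u x)` and `a (x u)`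
  have hmem := mul_sub_mem_bot_of_pow_three_mem_bot h3s hu3 hsu3
  constructor
  · refine Subalgebra.mem_bot_of_smul_mem_bot ha ?_
    rwa [← smul_mul_assoc, hax, sub_mul, Algebra.commutes, ← mul_sub]
  · refine Subalgebra.mem_bot_of_smul_mem_bot ha ?_
    rwa [← mul_smul_comm, hax]

theorem mem_bot_of_smul_mul_self_eq_smul {a s : F} (hs : s ≠ 0) {x : A}
    (hx3 : x ^ 3 ∈ (⊥ : Subalgebra F A)) (h : a • (x * x) = s • x) :
    x ∈ (⊥ : Subalgebra F A) := by
  have : (s * s) • x = (a * a) • x ^ 3 := by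
    calc (s * s) • x = a • (a • (x * x) * x) := by
          rw [h, smul_mul_assoc, smul_comm, h, smul_smul]
      _ = (a * a) • x ^ 3 := by rw [pow_succ, sq, smul_mul_assoc, smul_smul]
  refine Subalgebra.mem_bot_of_smul_mem_bot (mul_ne_zero hs hs) ?_
  rw [this]
  exact Subalgebra.smul_mem _ hx3 _

theorem mul_mul_mem_bot_of_add_add_pow_three_mem_bot {ρ : F} (hρ : IsPrimitiveRoot ρ 3)
    (h3 : (3 : F) ≠ 0) {x y z : A} {αx αy αz : F}
    (hx3 : x ^ 3 = algebraMap F A αx) (hy3 : y ^ 3 = algebraMap F A αy)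
    (hz3 : z ^ 3 = algebraMap F A αz)
    (hyx : y * x = ρ • (x * y)) (hxz : x * z = ρ • (z * x)) (hzy : z * y = ρ • (y * z))
    (h : (x + y + z) ^ 3 ∈ (⊥ : Subalgebra F A)) : x * y * z ∈ (⊥ : Subalgebra F A) := by
  have hcube := smul_add_smul_add_smul_pow_three_of_cyclic hρ hx3 hy3 hz3 hyx hxz hzy 1 1 1
  simp only [one_smul, one_pow, one_mul, mul_one] at hcube
  refine Subalgebra.mem_bot_of_smul_mem_bot
    (mul_ne_zero h3 (pow_ne_zero 2 (hρ.ne_zero (by norm_num)))) ?_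
  rw [← sub_sub_cancel (algebraMap F A _) ((3 * ρ ^ 2) • (x * y * z)), ← hcube]
  exact sub_mem (Subalgebra.algebraMap_mem _ _) h

theorem smul_add_smul_add_smul_ne_algebraMap_of_cyclic {ρ : F} (hρ : IsPrimitiveRoot ρ 3)
    (h3 : (3 : F) ≠ 0) {x y z : A} {αx αy αz : F}
    (hx3 : x ^ 3 = algebraMap F A αx) (hy3 : y ^ 3 = algebraMap F A αy)
    (hz3 : z ^ 3 = algebraMap F A αz) (hxnc : ∀ s : F, x ≠ algebraMap F A s)
    (hyx : y * x = ρ • (x * y)) (hxz : x * z = ρ • (z * x)) (hzy : z * y = ρ • (y * z))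
    {a b c s : F} (ha : a ≠ 0) (hs : s ≠ 0) :
    a • x + b • y + c • z ≠ algebraMap F A s := by
  intro hv
  have hx3' : x ^ 3 ∈ (⊥ : Subalgebra F A) := hx3 ▸ Subalgebra.algebraMap_mem _ _
  have hu3 : (b • y + c • z) ^ 3 ∈ (⊥ : Subalgebra F A) := by
    have h := smul_add_smul_add_smul_pow_three_of_cyclic hρ hx3 hy3 hz3 hyx hxz hzy 0 b c
    rw [zero_smul, zero_add, zero_mul, zero_mul, mul_zero, zero_smul, sub_zero] at h
    exact h ▸ Subalgebra.algebraMap_mem _ _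
  obtain ⟨hl, hr⟩ := mul_mem_bot_and_mem_bot_of_smul_add_eq_algebraMap ha (mul_ne_zero h3 hs)
    hx3' hu3 (by rw [← add_assoc, hv])
  have hρ1 : ρ ≠ 1 := hρ.ne_one (by norm_num)
  have hρ2 : ρ ^ 2 ≠ 1 := hρ.pow_ne_one_of_pos_of_lt (by norm_num) (by norm_num)
  have hρρ2 : ρ ≠ ρ ^ 2 := fun h ↦ by
    simpa using hρ.pow_inj (i := 1) (j := 2) (by norm_num) (by norm_num) (by rwa [pow_one])
  have hby : (b • y) * x = ρ • (x * (b • y)) := by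
    rw [smul_mul_assoc, hyx, mul_smul_comm, smul_comm]
  have hcz : (c • z) * x = ρ ^ 2 • (x * (c • z)) := by
    rw [smul_mul_assoc, hρ.mul_eq_sq_smul_of_mul_eq_smul hxz, mul_smul_comm, smul_comm]
  have hxz0 : x * (c • z) = 0 := mul_eq_zero_of_mul_add_mem_bot hρ2 hρρ2 hby hcz hl hr
  have hxy0 : x * (b • y) = 0 := by
    rw [add_comm] at hl hr
    exact mul_eq_zero_of_mul_add_mem_bot hρ1 hρρ2.symm hcz hby hl hr
  have hxx : a • (x * x) = s • x := by
    calc a • (x * x) = x * (a • x + b • y + c • z) := by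
          rw [mul_add, mul_add, hxy0, hxz0, add_zero, add_zero, mul_smul_comm]
      _ = s • x := by rw [hv, ← Algebra.commutes, Algebra.smul_def]
  obtain ⟨t, ht⟩ := Algebra.mem_bot.mp (mem_bot_of_smul_mul_self_eq_smul hs hx3' hxx)
  exact hxnc t ht.symm

end

theorem three_central_triangle_cyclic_general
    {F A : Type*} [Field F] [Ring A] [Algebra F A]
    (h3 : (3 : F) ≠ 0) (ρ : F) (hρ : IsPrimitiveRoot ρ 3)
    (x y z : A) (αx αy αz : F)
    (hx3 : x ^ 3 = algebraMap F A αx) (hy3 : y ^ 3 = algebraMap F A αy)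
    (hz3 : z ^ 3 = algebraMap F A αz)
    (hxnc : ∀ s : F, x ≠ algebraMap F A s)
    (hync : ∀ s : F, y ≠ algebraMap F A s)
    (hznc : ∀ s : F, z ≠ algebraMap F A s)
    (hind : LinearIndependent F ![x, y, z])
    (hyx : y * x = ρ • (x * y)) (hxz : x * z = ρ • (z * x))
    (hzy : z * y = ρ • (y * z)) :
    (∀ v ∈ Submodule.span F ({x, y, z} : Set A), v ≠ 0 →
        (∀ s : F, v ≠ algebraMap F A s) ∧ ∃ s : F, v ^ 3 = algebraMap F A s) ↔
      ∃ s : F, x * y * z = algebraMap F A s := by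
  constructor
  · intro H
    have hsum : x + y + z ≠ 0 := fun h ↦ one_ne_zero <|
      Fintype.linearIndependent_iff.mp hind (fun _ ↦ 1) (by simp [Fin.sum_univ_three, h]) 0
    obtain ⟨-, t, ht⟩ :=
      H _ (Submodule.mem_span_triple.mpr ⟨1, 1, 1, by simp only [one_smul]⟩) hsum
    obtain ⟨s, hs⟩ := Algebra.mem_bot.mp <| mul_mul_mem_bot_of_add_add_pow_three_mem_bot hρ h3
      hx3 hy3 hz3 hyx hxz hzy (ht ▸ Subalgebra.algebraMap_mem _ _)
    exact ⟨s, hs.symm⟩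
  · rintro ⟨t, ht⟩ v hv hv0
    obtain ⟨a, b, c, rfl⟩ := Submodule.mem_span_triple.mp hv
    refine ⟨fun s hs ↦ ?_, _, by
      rw [smul_add_smul_add_smul_pow_three_of_cyclic hρ hx3 hy3 hz3 hyx hxz hzy, ht,
        Algebra.smul_def, ← map_mul, ← map_sub]⟩
    have hs0 : s ≠ 0 := by rintro rfl; exact hv0 (hs.trans (map_zero _))
    obtain ha | hb | hc : a ≠ 0 ∨ b ≠ 0 ∨ c ≠ 0 := by
      by_contra! h
      obtain ⟨rfl, rfl, rfl⟩ := h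
      simp at hv0
    · exact smul_add_smul_add_smul_ne_algebraMap_of_cyclic hρ h3 hx3 hy3 hz3 hxnc hyx hxz hzy
        ha hs0 hs
    · exact smul_add_smul_add_smul_ne_algebraMap_of_cyclic hρ h3 hy3 hz3 hx3 hync hzy hyx hxz
        hb hs0 (by rw [← hs]; abel)
    · exact smul_add_smul_add_smul_ne_algebraMap_of_cyclic hρ h3 hz3 hx3 hy3 hznc hxz hzy hyx
        hc hs0 (by rw [← hs]; abel)

/-- Cyclic triangle of `3`-central elements: with `yx = ρ xy`, `xz = ρ zx`,
`zy = ρ yz`, the span `F x + F y + F z` is a `3`-central space if and only if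
`xyz ∈ F`. -/
theorem three_central_triangle_cyclic
    {F A : Type*} [Field F] [Infinite F] [Ring A] [Algebra F A]
    (h3 : (3 : F) ≠ 0) (ρ : F) (hρ : IsPrimitiveRoot ρ 3)
    (hcentral : ∀ a : A, (∀ b : A, a * b = b * a) → ∃ c : F, a = algebraMap F A c)
    (x y z : A) (αx αy αz : F)
    (hx3 : x ^ 3 = algebraMap F A αx) (hy3 : y ^ 3 = algebraMap F A αy)
    (hz3 : z ^ 3 = algebraMap F A αz)
    (hxnc : ∀ s : F, x ≠ algebraMap F A s)
    (hync : ∀ s : F, y ≠ algebraMap F A s)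
    (hznc : ∀ s : F, z ≠ algebraMap F A s)
    (hind : LinearIndependent F ![x, y, z])
    (hyx : y * x = ρ • (x * y)) (hxz : x * z = ρ • (z * x))
    (hzy : z * y = ρ • (y * z)) :
    (∀ v ∈ Submodule.span F ({x, y, z} : Set A), v ≠ 0 →
        (∀ s : F, v ≠ algebraMap F A s) ∧ ∃ s : F, v ^ 3 = algebraMap F A s) ↔
      ∃ s : F, x * y * z = algebraMap F A s :=
  three_central_triangle_cyclic_general h3 ρ hρ x y z αx αy αz hx3 hy3 hz3 hxnc hync hznc hind hyx
    hxz hzy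
end

section
/- Let A be a biquaternion division algebra over a field F of characteristic 2, and let x, z ∈ A be Artin-Schreier elements (x² + x ∈ F, z² + z ∈ F) that do not commute. Set r = x z + z x and t = r + z. Then x r + r x = r, x t + t x = 0, r t + t r + r = 0, and s = x + t is central in the subalgebra F[x,z]; consequently F[x,z] is a quaternion algebra over its center, which is either F or a quadratic extension of F. -/
/-!
In characteristic 2 the anticommutator `r = xz + zx` is the commutator `[x, z]`, and the
Artin–Schreier relations give `xr + rx = [x², z] = [x² + x, z] + r = r`, and symmetrically
`zr + rz = r`. Hence `s = x + r + z` commutes with `x` and `z`, and expanding `s²` gives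
`r² = s² + s + (x² + x) + (z² + z)`.

`B = F[x, z]` is a division algebra inside `A`, so `dim B ∣ 16`; it is not commutative, so
`dim B ≥ 3`. If `dim B = 16` then `B = A`, so `s ∈ F` and then `r² ∈ F`; now `x² = x + a`,
`rx = xr + r` and `r² ∈ F` are the defining relations of a quaternion algebra over `F`, which maps
onto a subalgebra containing `x`, `r` and `z = s + x + r`, forcing `dim B ≤ 4`.
-/

open Module

namespace CharTwo

variable {R : Type*} [Ring R] [CharP R 2] {x z : R}

theorem anticomm_anticomm_left (h : Commute (x * x + x) z) :
    x * (x * z + z * x) + (x * z + z * x) * x = x * z + z * x := by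
  linear_combination (norm := noncomm_ring)
    h.eq + (x * z * x + z * x * x - x * z) * two_eq_zero (R := R)

theorem anticomm_anticomm_right (h : Commute (z * z + z) x) :
    z * (x * z + z * x) + (x * z + z * x) * z = x * z + z * x := by
  simpa only [add_comm (z * x)] using anticomm_anticomm_left h

theorem anticomm_anticomm_add_right_eq_zero (h : Commute (x * x + x) z) :
    x * (x * z + z * x + z) + (x * z + z * x + z) * x = 0 := by
  linear_combination (norm := noncomm_ring)
    anticomm_anticomm_left h + (x * z + z * x) * two_eq_zero (R := R)

theorem anticomm_anticomm_add_right_add_self_eq_zero (h : Commute (z * z + z) x) :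
    (x * z + z * x) * (x * z + z * x + z) + (x * z + z * x + z) * (x * z + z * x)
      + (x * z + z * x) = 0 := by
  linear_combination (norm := noncomm_ring) anticomm_anticomm_right h +
    ((x * z + z * x) * (x * z + z * x) + (x * z + z * x)) * two_eq_zero (R := R)

theorem add_anticomm_add_right_commute_left (h : Commute (x * x + x) z) :
    Commute (x + (x * z + z * x + z)) x := by
  rw [commute_iff_eq]
  linear_combination (norm := noncomm_ring) anticomm_anticomm_add_right_eq_zero h -
    (x * (x * z + z * x + z)) * two_eq_zero (R := R)

theorem add_anticomm_add_right_commute_right (h : Commute (z * z + z) x) :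
    Commute (x + (x * z + z * x + z)) z := by
  rw [commute_iff_eq]
  linear_combination (norm := noncomm_ring) anticomm_anticomm_right h +
    (x * z - z * (x * z + z * x)) * two_eq_zero (R := R)

theorem anticomm_mul_self (hx : Commute (x * x + x) z) (hz : Commute (z * z + z) x) :
    (x * z + z * x) * (x * z + z * x) = (x + (x * z + z * x + z)) * (x + (x * z + z * x + z))
      + (x + (x * z + z * x + z)) + (x * x + x) + (z * z + z) := by
  linear_combination (norm := noncomm_ring) -anticomm_anticomm_left hx -
    anticomm_anticomm_right hz -
    (x * x + z * z + x + z + 2 * (x * z + z * x)) * two_eq_zero (R := R)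

end CharTwo

section Finrank

variable {F A : Type*} [Field F]

theorem Subalgebra.finrank_le_of_le_range [Ring A] [Algebra F A] {B : Type*} [Ring B]
    [Algebra F B] [FiniteDimensional F B] {S : Subalgebra F A} {f : B →ₐ[F] A}
    (h : S ≤ f.range) : finrank F S ≤ finrank F B := by
  rw [← Subalgebra.finrank_toSubmodule]
  exact (Submodule.finrank_mono (t := LinearMap.range f.toLinearMap)
    (Subalgebra.toSubmodule.monotone h)).trans (LinearMap.finrank_range_le _)

theorem Subalgebra.finrank_lt_finrank_of_lt [Ring A] [Algebra F A] {S T : Subalgebra F A}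
    [FiniteDimensional F T] (h : S < T) : finrank F S < finrank F T := by
  simpa only [Subalgebra.finrank_toSubmodule] using
    Submodule.finrank_lt_finrank_of_lt (Subalgebra.toSubmodule.strictMono h)

theorem Subalgebra.finrank_dvd_finrank [DivisionRing A] [Algebra F A] [FiniteDimensional F A]
    (S : Subalgebra F A) : finrank F S ∣ finrank F A := by
  let _ := divisionRingOfFiniteDimensional F S
  exact Module.finrank_dvd_finrank_right F S A

theorem two_lt_finrank_adjoin_pair [Ring A] [Algebra F A] [FiniteDimensional F A] {x z : A}
    (h : x * z ≠ z * x) : 2 < finrank F (Algebra.adjoin F {x, z}) := by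
  have := nontrivial_of_ne _ _ h
  have hbot : ⊥ < Algebra.adjoin F {x} := by
    refine bot_lt_iff_ne_bot.2 fun hx => ?_
    obtain ⟨c, rfl⟩ := Algebra.mem_bot.1 (hx ▸ Algebra.self_mem_adjoin_singleton F x)
    exact h (Algebra.commute_algebraMap_left c z).eq
  have hx : Algebra.adjoin F {x} < Algebra.adjoin F {x, z} := by
    refine lt_of_le_of_ne (Algebra.adjoin_mono (by simp)) fun hxz => h ?_
    have hz : z ∈ Algebra.adjoin F {x} := hxz ▸ Algebra.subset_adjoin (by simp)
    exact (Algebra.commute_of_mem_adjoin_self hz).eq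
  have := Subalgebra.finrank_lt_finrank_of_lt hbot
  have := Subalgebra.finrank_lt_finrank_of_lt hx
  rw [Subalgebra.finrank_bot] at *
  omega

end Finrank

section Quaternion

variable {F A : Type*} [Field F] [Ring A] [Algebra F A] [CharP A 2] {x z : A} {a b c : F}

/-- In Mathlib's `ℍ[F, a, 1, g]` one has `i² = a + i`, `j² = g`, `ji = j - ij`: these are the
characteristic-2 quaternion relations satisfied by `x` and `r = xz + zx` once `s ∈ F`, with
`g = r² = s² + s + a + b`. -/
def artinSchreierQuaternionBasis (hx : x * x + x = algebraMap F A a)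
    (hz : z * z + z = algebraMap F A b) (hs : x + (x * z + z * x + z) = algebraMap F A c) :
    QuaternionAlgebra.Basis A a 1 (c * c + c + a + b) where
  i := x
  j := x * z + z * x
  k := x * (x * z + z * x)
  i_mul_i := by
    rw [one_smul, ← Algebra.algebraMap_eq_smul_one]
    linear_combination (norm := noncomm_ring) hx - x * CharTwo.two_eq_zero (R := A)
  j_mul_j := by
    have hxz : Commute (x * x + x) z := hx ▸ Algebra.commute_algebraMap_left a z
    have hzx : Commute (z * z + z) x := hz ▸ Algebra.commute_algebraMap_left b x
    rw [CharTwo.anticomm_mul_self hxz hzx, hs, hx, hz, ← Algebra.algebraMap_eq_smul_one]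
    simp only [map_add, map_mul]
  i_mul_j := rfl
  j_mul_i := by
    have hxz : Commute (x * x + x) z := hx ▸ Algebra.commute_algebraMap_left a z
    rw [one_smul, eq_sub_iff_add_eq, add_comm]
    exact CharTwo.anticomm_anticomm_left hxz

theorem finrank_adjoin_le_four (hx : x * x + x = algebraMap F A a)
    (hz : z * z + z = algebraMap F A b) (hs : x + (x * z + z * x + z) = algebraMap F A c) :
    finrank F (Algebra.adjoin F {x, z}) ≤ 4 := by
  let q := artinSchreierQuaternionBasis hx hz hs
  have hz_eq : z = algebraMap F A c + x + (x * z + z * x) := by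
    linear_combination (norm := noncomm_ring)
      -hs + (z - algebraMap F A c) * CharTwo.two_eq_zero (R := A)
  have hle : Algebra.adjoin F {x, z} ≤ q.liftHom.range := by
    rw [QuaternionAlgebra.Basis.range_liftHom, Algebra.adjoin_le_iff]
    rintro y (rfl | rfl)
    · exact Algebra.subset_adjoin (by simp [q, artinSchreierQuaternionBasis])
    · rw [hz_eq]
      refine add_mem (add_mem (algebraMap_mem _ c) ?_) ?_ <;>
        exact Algebra.subset_adjoin (by simp [q, artinSchreierQuaternionBasis])
  calc finrank F (Algebra.adjoin F {x, z})
      ≤ finrank F (QuaternionAlgebra F a 1 (c * c + c + a + b)) :=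
        Subalgebra.finrank_le_of_le_range hle
    _ = 4 := QuaternionAlgebra.finrank_eq_four _ _ _

end Quaternion

/-- Non-commuting Artin-Schreier elements in a biquaternion division algebra in
characteristic 2: with `r = xz + zx`, `t = r + z`, `s = x + t`, one has
`xr + rx = r`, `xt + tx = 0`, `rt + tr + r = 0`, `s` is central in the
subalgebra `F[x,z]`, and `F[x,z]` is a quaternion algebra over its center
(which is `F` or a quadratic extension, so `dim_F F[x,z]` is `4` or `8`). -/
theorem biquaternion_artinSchreier_pair
    {F A : Type*} [Field F] [DivisionRing A] [Algebra F A] [CharP F 2]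
    (hcentral : ∀ u : A, (∀ v : A, u * v = v * u) → ∃ c : F, u = algebraMap F A c)
    (hdim : Module.finrank F A = 16)
    (x z : A) (a b : F)
    (hx : x * x + x = algebraMap F A a) (hz : z * z + z = algebraMap F A b)
    (hne : x * z ≠ z * x) :
    x * (x * z + z * x) + (x * z + z * x) * x = x * z + z * x ∧
    x * (x * z + z * x + z) + (x * z + z * x + z) * x = 0 ∧
    (x * z + z * x) * (x * z + z * x + z) + (x * z + z * x + z) * (x * z + z * x)
        + (x * z + z * x) = 0 ∧
    (∀ w ∈ Algebra.adjoin F ({x, z} : Set A),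
        (x + (x * z + z * x + z)) * w = w * (x + (x * z + z * x + z))) ∧
    (Module.finrank F (Algebra.adjoin F ({x, z} : Set A)) = 4 ∨
      Module.finrank F (Algebra.adjoin F ({x, z} : Set A)) = 8) := by
  have : CharP A 2 := charP_of_injective_algebraMap (algebraMap F A).injective 2
  have hxz : Commute (x * x + x) z := hx ▸ Algebra.commute_algebraMap_left a z
  have hzx : Commute (z * z + z) x := hz ▸ Algebra.commute_algebraMap_left b x
  have hs : ∀ w ∈ Algebra.adjoin F {x, z}, Commute (x + (x * z + z * x + z)) w :=
    fun w hw => Algebra.commute_of_mem_adjoin_of_forall_mem_commute hw <| by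
      rintro y (rfl | rfl)
      exacts [CharTwo.add_anticomm_add_right_commute_left hxz,
        CharTwo.add_anticomm_add_right_commute_right hzx]
  refine ⟨CharTwo.anticomm_anticomm_left hxz, CharTwo.anticomm_anticomm_add_right_eq_zero hxz,
    CharTwo.anticomm_anticomm_add_right_add_self_eq_zero hzx, fun w hw => (hs w hw).eq, ?_⟩
  have : FiniteDimensional F A := .of_finrank_pos (by omega)
  have hdvd := hdim ▸ Subalgebra.finrank_dvd_finrank (Algebra.adjoin F {x, z})
  have hgt := two_lt_finrank_adjoin_pair (F := F) hne
  have hne16 : finrank F (Algebra.adjoin F {x, z}) ≠ 16 := by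
    intro h16
    have htop : Algebra.adjoin F {x, z} = ⊤ := Algebra.toSubmodule_eq_top.1 <|
      Submodule.eq_top_of_finrank_eq (by rw [Subalgebra.finrank_toSubmodule, h16, hdim])
    obtain ⟨c, hc⟩ := hcentral _ fun v => (hs v (htop ▸ Algebra.mem_top)).eq
    have := finrank_adjoin_le_four hx hz hc
    omega
  have := Nat.le_of_dvd (by norm_num) hdvd
  interval_cases finrank F (Algebra.adjoin F {x, z}) <;> omega
end

section
/- Let A be a quaternion division algebra over a field F of characteristic 2 and let y, y' ∈ A (or in a biquaternion algebra) be square-central elements (y², y'² ∈ F^×, y, y' noncentral) that do not commute. Set t = y y' + y' y and r = y y' + y' y + y'. Then t ≠ 0, r ≠ 0, t commutes with both y and y' (so t is central in F[y,y']), y r + r y = t, and q = y r t^{-1} satisfies q² + q ∈ Z(F[y,y']) and q r + r q = r; hence F[y,y'] is a quaternion algebra over its center. -/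
/-!
In characteristic 2 the anticommutator `t = yy' + y'y` commutes with `y` and `y'` once their
squares are central, so `r = t + y'` satisfies `yr + ry = t`. For `q = y r t⁻¹` this gives
`qy + yq = y` and `qy' + y'q = qr + rq = r`; and in characteristic 2, whenever `qx + xq = c` and
`qc + cq = c`, the element `q² + q` commutes with `x`.
-/

section Ring

variable {R : Type*} [Ring R] {x z : R}

theorem Commute.anticomm_left_of_mul_self (h : Commute (x * x) z) :
    Commute (x * z + z * x) x :=
  calc (x * z + z * x) * x = x * z * x + z * (x * x) := by noncomm_ring
    _ = x * z * x + x * x * z := by rw [h.eq]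
    _ = x * (x * z + z * x) := by noncomm_ring

theorem Commute.anticomm_right_of_mul_self (h : Commute (z * z) x) :
    Commute (x * z + z * x) z := by
  rw [add_comm]
  exact h.anticomm_left_of_mul_self

variable [CharP R 2]

theorem anticomm_add_right_eq_of_commute (h : Commute (x * z + z * x) x) :
    x * (x * z + z * x + z) + (x * z + z * x + z) * x = x * z + z * x := by
  set t := x * z + z * x
  calc x * (t + z) + (t + z) * x = (x * t + t * x) + (x * z + z * x) := by noncomm_ring
    _ = t := by rw [h.eq, CharTwo.add_self_eq_zero, zero_add]

theorem commute_mul_self_add_self_of_anticomm {q c : R} (hx : q * x + x * q = c)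
    (hc : q * c + c * q = c) : Commute (q * q + q) x := by
  have hqx : q * x = c + x * q := CharTwo.add_eq_iff_eq_add.mp hx
  calc (q * q + q) * x = q * (q * x) + q * x := by noncomm_ring
    _ = q * (c + x * q) + (c + x * q) := by rw [hqx]
    _ = (q * x) * q + q * c + x * q + c := by noncomm_ring
    _ = (c + x * q) * q + q * c + x * q + c := by rw [hqx]
    _ = x * (q * q + q) + (q * c + c * q) + c := by noncomm_ring
    _ = x * (q * q + q) := by rw [hc, add_assoc, CharTwo.add_self_eq_zero, add_zero]

end Ring

section DivisionRing

variable {D : Type*} [DivisionRing D] {y r t x : D}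

theorem anticomm_mul_mul_inv_of_commute (htx : Commute t x) (hrx : Commute r x) :
    y * r * t⁻¹ * x + x * (y * r * t⁻¹) = (y * x + x * y) * r * t⁻¹ := by
  rw [mul_assoc (y * r), htx.inv_left₀.eq, ← mul_assoc, mul_assoc y, hrx.eq]
  noncomm_ring

theorem anticomm_mul_mul_inv_self (ht : t ≠ 0) (hty : Commute t y) (h : y * r + r * y = t) :
    y * r * t⁻¹ * y + y * (y * r * t⁻¹) = y :=
  calc y * r * t⁻¹ * y + y * (y * r * t⁻¹) = y * (y * r + r * y) * t⁻¹ := by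
        rw [mul_assoc (y * r), hty.inv_left₀.eq]
        noncomm_ring
    _ = y := by rw [h, mul_inv_cancel_right₀ ht]

theorem Commute.mul_mul_inv_cancel (ht : t ≠ 0) (htr : Commute t r) : t * r * t⁻¹ = r := by
  rw [htr.eq, mul_inv_cancel_right₀ ht]

end DivisionRing

theorem squareCentral_noncommuting_pair_general
    {F A : Type*} [Field F] [DivisionRing A] [Algebra F A] [CharP F 2]
    (y y' : A) (a a' : F)
    (hy : y * y = algebraMap F A a) (hy' : y' * y' = algebraMap F A a')
    (hne : y * y' ≠ y' * y) :
    y * y' + y' * y ≠ 0 ∧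
    y * y' + y' * y + y' ≠ 0 ∧
    (y * y' + y' * y) * y = y * (y * y' + y' * y) ∧
    (y * y' + y' * y) * y' = y' * (y * y' + y' * y) ∧
    y * (y * y' + y' * y + y') + (y * y' + y' * y + y') * y = y * y' + y' * y ∧
    (y * (y * y' + y' * y + y') * (y * y' + y' * y)⁻¹) * (y * y' + y' * y + y')
        + (y * y' + y' * y + y') * (y * (y * y' + y' * y + y') * (y * y' + y' * y)⁻¹)
      = y * y' + y' * y + y' ∧
    ((y * (y * y' + y' * y + y') * (y * y' + y' * y)⁻¹) *
        (y * (y * y' + y' * y + y') * (y * y' + y' * y)⁻¹) +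
        (y * (y * y' + y' * y + y') * (y * y' + y' * y)⁻¹)) * y
      = y * ((y * (y * y' + y' * y + y') * (y * y' + y' * y)⁻¹) *
        (y * (y * y' + y' * y + y') * (y * y' + y' * y)⁻¹) +
        (y * (y * y' + y' * y + y') * (y * y' + y' * y)⁻¹)) ∧
    ((y * (y * y' + y' * y + y') * (y * y' + y' * y)⁻¹) *
        (y * (y * y' + y' * y + y') * (y * y' + y' * y)⁻¹) +
        (y * (y * y' + y' * y + y') * (y * y' + y' * y)⁻¹)) * y'
      = y' * ((y * (y * y' + y' * y + y') * (y * y' + y' * y)⁻¹) *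
        (y * (y * y' + y' * y + y') * (y * y' + y' * y)⁻¹) +
        (y * (y * y' + y' * y + y') * (y * y' + y' * y)⁻¹)) := by
  have : CharP A 2 := charP_of_injective_algebraMap (algebraMap F A).injective 2
  have hty : Commute (y * y' + y' * y) y :=
    Commute.anticomm_left_of_mul_self (hy ▸ Algebra.commute_algebraMap_left a y')
  have hty' : Commute (y * y' + y' * y) y' :=
    Commute.anticomm_right_of_mul_self (hy' ▸ Algebra.commute_algebraMap_left a' y)
  have hyr := anticomm_add_right_eq_of_commute hty
  set t := y * y' + y' * y
  set r := t + y'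
  have ht : t ≠ 0 := fun h => hne (CharTwo.add_eq_zero.mp h)
  have hr : r ≠ 0 := fun h => hne (CharTwo.add_eq_zero.mp h ▸ hty).eq.symm
  have htr : Commute t r := (Commute.refl t).add_right hty'
  have hqr : y * r * t⁻¹ * r + r * (y * r * t⁻¹) = r := by
    rw [anticomm_mul_mul_inv_of_commute htr (Commute.refl r), hyr, htr.mul_mul_inv_cancel ht]
  have hqy' : y * r * t⁻¹ * y' + y' * (y * r * t⁻¹) = r := by
    rw [anticomm_mul_mul_inv_of_commute hty' (hty'.add_left (Commute.refl y')),
      htr.mul_mul_inv_cancel ht]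
  have hqy := anticomm_mul_mul_inv_self ht hty hyr
  exact ⟨ht, hr, hty.eq, hty'.eq, hyr, hqr, (commute_mul_self_add_self_of_anticomm hqy hqy).eq,
    (commute_mul_self_add_self_of_anticomm hqy' hqr).eq⟩

/-- Non-commuting square-central elements in characteristic 2: with
`t = yy' + y'y` and `r = t + y'`, one has `t ≠ 0`, `r ≠ 0`, `t` commutes with
`y` and `y'`, `yr + ry = t`, and `q = y r t⁻¹` satisfies `qr + rq = r` and
`q² + q` commutes with `y` and `y'`. -/
theorem squareCentral_noncommuting_pair
    {F A : Type*} [Field F] [DivisionRing A] [Algebra F A] [CharP F 2]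
    (y y' : A) (a a' : F) (ha : a ≠ 0) (ha' : a' ≠ 0)
    (hy : y * y = algebraMap F A a) (hy' : y' * y' = algebraMap F A a')
    (hync : ∀ s : F, y ≠ algebraMap F A s)
    (hy'nc : ∀ s : F, y' ≠ algebraMap F A s)
    (hne : y * y' ≠ y' * y) :
    y * y' + y' * y ≠ 0 ∧
    y * y' + y' * y + y' ≠ 0 ∧
    (y * y' + y' * y) * y = y * (y * y' + y' * y) ∧
    (y * y' + y' * y) * y' = y' * (y * y' + y' * y) ∧
    y * (y * y' + y' * y + y') + (y * y' + y' * y + y') * y = y * y' + y' * y ∧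
    (y * (y * y' + y' * y + y') * (y * y' + y' * y)⁻¹) * (y * y' + y' * y + y')
        + (y * y' + y' * y + y') * (y * (y * y' + y' * y + y') * (y * y' + y' * y)⁻¹)
      = y * y' + y' * y + y' ∧
    ((y * (y * y' + y' * y + y') * (y * y' + y' * y)⁻¹) *
        (y * (y * y' + y' * y + y') * (y * y' + y' * y)⁻¹) +
        (y * (y * y' + y' * y + y') * (y * y' + y' * y)⁻¹)) * y
      = y * ((y * (y * y' + y' * y + y') * (y * y' + y' * y)⁻¹) *
        (y * (y * y' + y' * y + y') * (y * y' + y' * y)⁻¹) +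
        (y * (y * y' + y' * y + y') * (y * y' + y' * y)⁻¹)) ∧
    ((y * (y * y' + y' * y + y') * (y * y' + y' * y)⁻¹) *
        (y * (y * y' + y' * y + y') * (y * y' + y' * y)⁻¹) +
        (y * (y * y' + y' * y + y') * (y * y' + y' * y)⁻¹)) * y'
      = y' * ((y * (y * y' + y' * y + y') * (y * y' + y' * y)⁻¹) *
        (y * (y * y' + y' * y + y') * (y * y' + y' * y)⁻¹) +
        (y * (y * y' + y' * y + y') * (y * y' + y' * y)⁻¹)) :=
  squareCentral_noncommuting_pair_general y y' a a' hy hy' hne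
end

section
/- Let H = ℝ ⊕ ℝi ⊕ ℝj ⊕ ℝk be the real quaternions and let f(z) = z² + a z b + c with a, b, c ∈ H all nonzero, regarded as a two-sided polynomial (evaluation: f(z₀) = z₀² + a z₀ b + c). Then the number of purely imaginary roots of f with pairwise distinct norms is at most two. -/
/-!
A purely imaginary root `z` satisfies `z² = -N` with `N = normSq z`, so the equation gives
`a z b = N - c`, i.e. `z = N u + v` with `u = a⁻¹b⁻¹`, `v = -a⁻¹cb⁻¹`. Substituting back into
`z² + N = 0` shows that the real number `N` is a root of the quaternion-valued quadratic
`N² u² + N (1 + uv + vu) + v²`, whose leading coefficient `u²` is nonzero. Such a quadratic has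
at most two real roots, by the same difference argument as over a field.
-/

open Quaternion

section QuadraticRoots

variable {K V : Type*} [Field K] [AddCommGroup V] [Module K V] {A B C : V} {x y z : K}

theorem add_smul_add_eq_zero_of_quadratic_roots (hx : x ^ 2 • A + x • B + C = 0)
    (hy : y ^ 2 • A + y • B + C = 0) (hxy : x ≠ y) : (x + y) • A + B = 0 := by
  have h : (x - y) • ((x + y) • A + B) = 0 := by
    rw [← sub_eq_zero.mpr (hx.trans hy.symm)]
    module
  exact (smul_eq_zero.mp h).resolve_left (sub_ne_zero.mpr hxy)

theorem eq_zero_of_three_quadratic_roots (hx : x ^ 2 • A + x • B + C = 0)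
    (hy : y ^ 2 • A + y • B + C = 0) (hz : z ^ 2 • A + z • B + C = 0)
    (hxy : x ≠ y) (hxz : x ≠ z) (hyz : y ≠ z) : A = 0 := by
  have h : (y - z) • A = 0 := by
    rw [← sub_eq_zero.mpr ((add_smul_add_eq_zero_of_quadratic_roots hx hy hxy).trans
      (add_smul_add_eq_zero_of_quadratic_roots hx hz hxz).symm)]
    module
  exact (smul_eq_zero.mp h).resolve_left (sub_ne_zero.mpr hyz)

end QuadraticRoots

theorem quadratic_eq_zero_of_sq_eq_neg {R A : Type*} [CommRing R] [Ring A] [Algebra R A]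
    {t : R} {u v : A} (h : (t • u + v) ^ 2 = -algebraMap R A t) :
    t ^ 2 • (u * u) + t • (1 + u * v + v * u) + v * v = 0 := by
  rw [← neg_add_cancel (algebraMap R A t), ← h, Algebra.algebraMap_eq_smul_one]
  simp only [sq, add_mul, mul_add, smul_mul_assoc, mul_smul_comm, smul_add, smul_smul]
  abel

theorem Quaternion.eq_normSq_smul_add_of_twoSided_root {R : Type*} [Field R] [LinearOrder R]
    [IsStrictOrderedRing R] {a b c z : ℍ[R]} (ha : a ≠ 0) (hb : b ≠ 0)
    (hz : z.re = 0) (h : z ^ 2 + a * z * b + c = 0) :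
    z = normSq z • (a⁻¹ * b⁻¹) + -(a⁻¹ * c * b⁻¹) := by
  have hazb : a * z * b = normSq z - c := by
    rw [← sub_eq_zero, ← h, sq_eq_neg_normSq.mpr hz]
    abel
  calc z = a⁻¹ * (a * z * b) * b⁻¹ := by simp [mul_assoc, ha, hb]
    _ = _ := by rw [hazb, mul_sub, sub_mul, mul_coe_eq_smul, smul_mul_assoc, sub_eq_add_neg]

theorem twoSided_quadratic_pure_imaginary_roots_general
    (a b c : Quaternion ℝ) (ha : a ≠ 0) (hb : b ≠ 0)
    (z₁ z₂ z₃ : Quaternion ℝ)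
    (h₁im : z₁.re = 0) (h₂im : z₂.re = 0) (h₃im : z₃.re = 0)
    (h₁ : z₁ ^ 2 + a * z₁ * b + c = 0)
    (h₂ : z₂ ^ 2 + a * z₂ * b + c = 0)
    (h₃ : z₃ ^ 2 + a * z₃ * b + c = 0)
    (h12 : Quaternion.normSq z₁ ≠ Quaternion.normSq z₂)
    (h13 : Quaternion.normSq z₁ ≠ Quaternion.normSq z₃)
    (h23 : Quaternion.normSq z₂ ≠ Quaternion.normSq z₃) :
    False := by
  set u := a⁻¹ * b⁻¹
  set v := -(a⁻¹ * c * b⁻¹)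
  have normSq_isRoot : ∀ z : ℍ[ℝ], z.re = 0 → z ^ 2 + a * z * b + c = 0 →
      normSq z ^ 2 • (u * u) + normSq z • (1 + u * v + v * u) + v * v = 0 := by
    intro z hz h
    apply quadratic_eq_zero_of_sq_eq_neg
    rw [← eq_normSq_smul_add_of_twoSided_root ha hb hz h, algebraMap_def]
    exact sq_eq_neg_normSq.mpr hz
  have hu : u * u ≠ 0 := by simp [u, ha, hb]
  exact hu (eq_zero_of_three_quadratic_roots (normSq_isRoot z₁ h₁im h₁)
    (normSq_isRoot z₂ h₂im h₂) (normSq_isRoot z₃ h₃im h₃) h12 h13 h23)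

/-- A two-sided quadratic quaternion polynomial `z² + a z b + c` (with
`a, b, c ≠ 0`) has at most two purely imaginary roots with pairwise distinct
norms. -/
theorem twoSided_quadratic_pure_imaginary_roots
    (a b c : Quaternion ℝ) (ha : a ≠ 0) (hb : b ≠ 0) (hc : c ≠ 0)
    (z₁ z₂ z₃ : Quaternion ℝ)
    (h₁im : z₁.re = 0) (h₂im : z₂.re = 0) (h₃im : z₃.re = 0)
    (h₁ : z₁ ^ 2 + a * z₁ * b + c = 0)
    (h₂ : z₂ ^ 2 + a * z₂ * b + c = 0)
    (h₃ : z₃ ^ 2 + a * z₃ * b + c = 0)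
    (h12 : Quaternion.normSq z₁ ≠ Quaternion.normSq z₂)
    (h13 : Quaternion.normSq z₁ ≠ Quaternion.normSq z₃)
    (h23 : Quaternion.normSq z₂ ≠ Quaternion.normSq z₃) :
    False :=
  twoSided_quadratic_pure_imaginary_roots_general a b c ha hb z₁ z₂ z₃ h₁im h₂im h₃im h₁ h₂ h₃ h12
    h13 h23
end

section
/- Let H be the real quaternions and f(z) a standard quaternion polynomial with associated polynomials g(N), h(N) (one real variable N) such that f(z₀) = g(N₀)z₀ + h(N₀) for all purely imaginary z₀ with N₀ = -z₀². A purely imaginary z₀ of norm N₀ is a root of f if and only if either (1) g(N₀) = 0 and h(N₀) = 0, or (2) g(N₀) ≠ 0, N₀ satisfies -g(N) ḡ(N) g(N) N = h(N) ḡ(N) h(N) at N = N₀, and z₀ = -g(N₀)⁻¹ h(N₀). -/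
/-! Writing `G = g(N₀)` and `H = h(N₀)`, a root is a solution of the linear equation `G z₀ + H = 0`.
If `G = 0` this says `H = 0`; otherwise it says `z₀ = -G⁻¹ H`. The norm equation is then automatic:
since `Ḡ G` is real it commutes with `z₀`, so `G Ḡ G z₀² = (G z₀) Ḡ (G z₀) = H Ḡ H`. -/

theorem mul_add_eq_zero_iff_eq_neg_inv_mul {D : Type*} [DivisionRing D] {g z h : D}
    (hg : g ≠ 0) : g * z + h = 0 ↔ z = -(g⁻¹ * h) := by
  rw [add_eq_zero_iff_eq_neg, ← mul_neg, eq_inv_mul_iff_mul_eq₀ hg]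

theorem Commute.mul_mul_mul_sq {R : Type*} [Semiring R] {g s z : R} (hz : Commute z (s * g)) :
    g * s * g * z ^ 2 = g * z * s * (g * z) := by
  rw [sq, mul_assoc g s g, ← mul_assoc _ z z, mul_assoc g, ← hz.eq]
  simp only [mul_assoc]

theorem Quaternion.neg_mul_star_mul_mul_neg_sq_of_mul_eq_neg {g z h : Quaternion ℝ}
    (hgz : g * z = -h) : -(g * star g * g * (-(z ^ 2))) = h * star g * h := by
  have hcomm : Commute z (star g * g) := by
    rw [Quaternion.star_mul_self]
    exact (Quaternion.coe_commute _ _).symm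
  rw [mul_neg, neg_neg, hcomm.mul_mul_mul_sq, hgz, neg_mul, neg_mul, mul_neg, neg_neg]

/-- Criterion for purely imaginary roots: if `f(z₀) = g(N₀) z₀ + h(N₀)` for all
purely imaginary `z₀` (with `N₀ = -z₀²`), then such `z₀` is a root of `f` iff
either `g(N₀) = h(N₀) = 0`, or `g(N₀) ≠ 0`, `N₀` satisfies
`-g(N) ḡ(N) g(N) N = h(N) ḡ(N) h(N)`, and `z₀ = -g(N₀)⁻¹ h(N₀)`. -/
theorem pure_imaginary_root_criterion
    (fval : Quaternion ℝ → Quaternion ℝ)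
    (g h : Polynomial (Quaternion ℝ))
    (hf : ∀ z₀ : Quaternion ℝ, z₀.re = 0 →
      fval z₀ = Polynomial.eval (-(z₀ ^ 2)) g * z₀ + Polynomial.eval (-(z₀ ^ 2)) h) :
    ∀ z₀ : Quaternion ℝ, z₀.re = 0 →
      (fval z₀ = 0 ↔
        (Polynomial.eval (-(z₀ ^ 2)) g = 0 ∧ Polynomial.eval (-(z₀ ^ 2)) h = 0) ∨
        (Polynomial.eval (-(z₀ ^ 2)) g ≠ 0 ∧
          -(Polynomial.eval (-(z₀ ^ 2)) g * star (Polynomial.eval (-(z₀ ^ 2)) g) *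
              Polynomial.eval (-(z₀ ^ 2)) g * (-(z₀ ^ 2)))
            = Polynomial.eval (-(z₀ ^ 2)) h * star (Polynomial.eval (-(z₀ ^ 2)) g) *
              Polynomial.eval (-(z₀ ^ 2)) h ∧
          z₀ = -((Polynomial.eval (-(z₀ ^ 2)) g)⁻¹ * Polynomial.eval (-(z₀ ^ 2)) h))) := by
  intro z₀ hz
  rw [hf z₀ hz]
  set G := Polynomial.eval (-(z₀ ^ 2)) g
  set H := Polynomial.eval (-(z₀ ^ 2)) h
  by_cases hG : G = 0
  · simp [hG]
  rw [mul_add_eq_zero_iff_eq_neg_inv_mul hG]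
  simp only [hG, false_and, false_or, ne_eq, not_false_eq_true, true_and]
  refine ⟨fun hz₀ => ⟨?_, hz₀⟩, And.right⟩
  apply Quaternion.neg_mul_star_mul_mul_neg_sq_of_mul_eq_neg
  rw [hz₀, mul_neg, ← mul_assoc, mul_inv_cancel₀ hG, one_mul]
end

section
/- Let H be the real quaternions, and f(z), p(z) ∈ H[z] standard polynomials with f(z) = p(z)·(z - a) for some a ∈ H. If z₀ ≠ a is a root of f, then b := (z₀ - a) z₀ (z₀ - a)⁻¹ is a root of p, and z₀ satisfies the quadratic relation z₀² - (a + b) z₀ + b a = 0. -/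
/-!
Evaluation is not multiplicative, but a linear right factor `z - a` can be pulled out at the
cost of changing the evaluation point: if `b (z₀ - a) = (z₀ - a) z₀`, then moving `z₀ - a` to
the right through each power `z₀ⁿ` turns it into `bⁿ`, so `f(z₀) = p(b)(z₀ - a)`. For `z₀ ≠ a`
the conjugate `b = (z₀ - a) z₀ (z₀ - a)⁻¹` satisfies this, and `z₀ - a` is invertible, so
`p(b) = 0`; the quadratic relation is the same identity `(z₀ - a) z₀ - b (z₀ - a) = 0` expanded.
-/

open Polynomial

theorem Polynomial.eval_mul_X_sub_C_of_semiconjBy {R : Type*} [Ring R] {a z b : R}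
    (h : SemiconjBy (z - a) z b) (p : R[X]) :
    (p * (X - C a)).eval z = p.eval b * (z - a) := by
  induction p using Polynomial.induction_on' with
  | add p q hp hq => rw [add_mul, eval_add, hp, hq, eval_add, add_mul]
  | monomial n c =>
    rw [mul_sub, eval_sub, eval_mul_X, monomial_mul_C, eval_monomial, eval_monomial,
      eval_monomial, mul_assoc c (b ^ n), ← (h.pow_right n).eq, sub_mul, mul_sub, ← pow_succ',
      mul_assoc, mul_assoc, pow_succ]

/-- Wedderburn's factorization observation: if `f(z) = p(z)(z - a)` in the ring of
standard quaternion polynomials and `z₀ ≠ a` is a root of `f`, then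
`b = (z₀-a) z₀ (z₀-a)⁻¹` is a root of `p` and `z₀² - (a+b) z₀ + b a = 0`. -/
theorem wedderburn_factorization_root
    (f p : Polynomial (Quaternion ℝ)) (a : Quaternion ℝ)
    (hf : f = p * (Polynomial.X - Polynomial.C a))
    (z₀ : Quaternion ℝ) (hz : z₀ ≠ a) (hroot : Polynomial.eval z₀ f = 0) :
    Polynomial.eval ((z₀ - a) * z₀ * (z₀ - a)⁻¹) p = 0 ∧
    z₀ ^ 2 - (a + (z₀ - a) * z₀ * (z₀ - a)⁻¹) * z₀ + ((z₀ - a) * z₀ * (z₀ - a)⁻¹) * a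
      = 0 := by
  set b := (z₀ - a) * z₀ * (z₀ - a)⁻¹
  have hu : z₀ - a ≠ 0 := sub_ne_zero.mpr hz
  have hb : SemiconjBy (z₀ - a) z₀ b := (inv_mul_cancel_right₀ hu _).symm
  rw [hf, eval_mul_X_sub_C_of_semiconjBy hb] at hroot
  refine ⟨(mul_eq_zero.mp hroot).resolve_right hu, ?_⟩
  calc z₀ ^ 2 - (a + b) * z₀ + b * a = (z₀ - a) * z₀ - b * (z₀ - a) := by noncomm_ring
    _ = 0 := by rw [hb.eq, sub_self]
end

section
/- Let F be a field of characteristic 3 and C the F-algebra generated by x, y₁, y₂ subject to x³ = α ∈ F^×, x y₂ - y₂ x = y₁, x y₁ - y₁ x = β·1 (β ∈ F), and y₁ y₂ - y₂ y₁ = γ·1 (γ ∈ F). Then w := β y₂ + γ x + y₁², y₁³, and y₂³ all commute with x, y₁, and y₂, hence are central in C. -/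
/-- Centrality in the characteristic-3 Clifford algebra: with `x³ = α`,
`xy₂ - y₂x = y₁`, `xy₁ - y₁x = β`, `y₁y₂ - y₂y₁ = γ`, the elements
`w = βy₂ + γx + y₁²`, `y₁³`, `y₂³` commute with `x, y₁, y₂`. -/
theorem clifford_char3_central_elements
    {F A : Type*} [Field F] [Ring A] [Algebra F A] [CharP F 3]
    (α β γ : F) (hα : α ≠ 0)
    (x y₁ y₂ : A)
    (hx3 : x ^ 3 = algebraMap F A α)
    (h2 : x * y₂ - y₂ * x = y₁)
    (h1 : x * y₁ - y₁ * x = algebraMap F A β)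
    (h12 : y₁ * y₂ - y₂ * y₁ = algebraMap F A γ) :
    ((β • y₂ + γ • x + y₁ ^ 2) * x = x * (β • y₂ + γ • x + y₁ ^ 2) ∧
      (β • y₂ + γ • x + y₁ ^ 2) * y₁ = y₁ * (β • y₂ + γ • x + y₁ ^ 2) ∧
      (β • y₂ + γ • x + y₁ ^ 2) * y₂ = y₂ * (β • y₂ + γ • x + y₁ ^ 2)) ∧
    (y₁ ^ 3 * x = x * y₁ ^ 3 ∧ y₁ ^ 3 * y₁ = y₁ * y₁ ^ 3 ∧
      y₁ ^ 3 * y₂ = y₂ * y₁ ^ 3) ∧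
    (y₂ ^ 3 * x = x * y₂ ^ 3 ∧ y₂ ^ 3 * y₁ = y₁ * y₂ ^ 3 ∧
      y₂ ^ 3 * y₂ = y₂ * y₂ ^ 3) := by
  set b := algebraMap F A β with hb
  set g := algebraMap F A γ with hg
  have h3 : ∀ t : A, (3 : ℕ) • t = 0 := by
    intro t
    have : ((3 : ℕ) : A) = 0 := by
      rw [← map_natCast (algebraMap F A) 3,
        show ((3:ℕ):F) = 0 from CharP.cast_eq_zero F 3, map_zero]
    rw [nsmul_eq_mul, this, zero_mul]
  have h3' : ∀ t : A, (3 : ℤ) • t = 0 := by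
    intro t
    have : ((3 : ℤ) : A) = 0 := by
      rw [← map_intCast (algebraMap F A) 3,
        show ((3:ℤ):F) = 0 by exact_mod_cast CharP.cast_eq_zero F 3, map_zero]
    rw [zsmul_eq_mul, this, zero_mul]
  -- base commutation relations in product form
  have e2b : x * y₂ = y₂ * x + y₁ := by rw [← h2]; noncomm_ring
  have e1b : x * y₁ = y₁ * x + b := by rw [← h1]; noncomm_ring
  have e12b : y₁ * y₂ = y₂ * y₁ + g := by rw [← h12]; noncomm_ring
  have e2 : ∀ z : A, x * (y₂ * z) = y₂ * (x * z) + y₁ * z := by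
    intro z; rw [← mul_assoc, e2b]; noncomm_ring
  have e1 : ∀ z : A, x * (y₁ * z) = y₁ * (x * z) + b * z := by
    intro z; rw [← mul_assoc, e1b]; noncomm_ring
  have e12 : ∀ z : A, y₁ * (y₂ * z) = y₂ * (y₁ * z) + g * z := by
    intro z; rw [← mul_assoc, e12b]; noncomm_ring
  have cbx : x * b = b * x := (Algebra.commutes β x).symm
  have cb1 : y₁ * b = b * y₁ := (Algebra.commutes β y₁).symm
  have cb2 : y₂ * b = b * y₂ := (Algebra.commutes β y₂).symm
  have cgx : x * g = g * x := (Algebra.commutes γ x).symm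
  have cg1 : y₁ * g = g * y₁ := (Algebra.commutes γ y₁).symm
  have cg2 : y₂ * g = g * y₂ := (Algebra.commutes γ y₂).symm
  have cgb : g * b = b * g := by rw [hb, hg, ← map_mul, ← map_mul, mul_comm]
  have cbx' : ∀ z : A, x * (b * z) = b * (x * z) := by
    intro z; rw [← mul_assoc, cbx, mul_assoc]
  have cb1' : ∀ z : A, y₁ * (b * z) = b * (y₁ * z) := by
    intro z; rw [← mul_assoc, cb1, mul_assoc]
  have cb2' : ∀ z : A, y₂ * (b * z) = b * (y₂ * z) := by
    intro z; rw [← mul_assoc, cb2, mul_assoc]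
  have cgx' : ∀ z : A, x * (g * z) = g * (x * z) := by
    intro z; rw [← mul_assoc, cgx, mul_assoc]
  have cg1' : ∀ z : A, y₁ * (g * z) = g * (y₁ * z) := by
    intro z; rw [← mul_assoc, cg1, mul_assoc]
  have cg2' : ∀ z : A, y₂ * (g * z) = g * (y₂ * z) := by
    intro z; rw [← mul_assoc, cg2, mul_assoc]
  have cgb' : ∀ z : A, g * (b * z) = b * (g * z) := by
    intro z; rw [← mul_assoc, cgb, mul_assoc]
  have hsβ : β • y₂ = b * y₂ := Algebra.smul_def β y₂
  have hsγ : γ • x = g * x := Algebra.smul_def γ x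
  refine ⟨⟨?_, ?_, ?_⟩, ⟨?_, ?_, ?_⟩, ⟨?_, ?_, ?_⟩⟩ <;>
  · simp only [hsβ, hsγ, pow_succ, pow_zero, one_mul, mul_add, add_mul, mul_assoc,
      e2b, e1b, e12b, e2, e1, e12, cbx, cb1, cb2, cgx, cg1, cg2, cgb,
      cbx', cb1', cb2', cgx', cg1', cg2', cgb']
    try abel_nf <;> simp only [h3, h3', add_zero, zero_add]
end
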